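/- arXiv:math/0501092 — 7 statements merged into one kernel-verified Lean document; each statement's English description precedes it below -/
import Mathlib

section
/- Let A be a Banach algebra, let I be a closed ideal of A with a bounded approximate identity, let E be a pseudo-unital Banach I-bimodule, and let D : I → E* be a bounded derivation. Then the I-module actions on E extend canonically to A-module actions making E a Banach A-bimodule, and there is a bounded derivation D̃ : A → E* extending D which is continuous from the I-strict topology on A to the weak-* topology on E*. -/
/-!
The extensions are pointwise limits along the bounded approximate identity `e`:
`L a = lim li (a e_i)`, `R a = lim ri (a e_i)` and `D' a = lim D (a e_i)`, which are bounded
bilinear because `e` is bounded. By pseudo-unitality every vector has the form `li x u` and the form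
`ri y w`, and on such vectors the limits exist and have closed forms:
`L a (li x u) = li (a x) u`, `R a (ri y w) = ri (y a) w` and, by the Leibniz rule for
`D (a e_i x)`, `D' a (li x u) = D (a x) u - D x (R a u)`. The module identities, the derivation
identity and the strict continuity of `D'` are all read off these formulas.
-/

open Filter Topology NormedSpace

namespace ContinuousLinearMap

variable {𝕜 X E G : Type*} [NontriviallyNormedField 𝕜] [SeminormedAddCommGroup X]
  [NormedSpace 𝕜 X] [SeminormedAddCommGroup E] [NormedSpace 𝕜 E] [NormedAddCommGroup G]
  [NormedSpace 𝕜 G]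

theorem exists_tendsto_apply₂_of_norm_le {ι : Type*} {l : Filter ι} [l.NeBot]
    (g : ι → X →L[𝕜] E →L[𝕜] G) {C : ℝ} (hgC : ∀ i, ‖g i‖ ≤ C)
    (hg : ∀ a v, ∃ c, Tendsto (fun i => g i a v) l (𝓝 c)) :
    ∃ T : X →L[𝕜] E →L[𝕜] G, ∀ a v, Tendsto (fun i => g i a v) l (𝓝 (T a v)) := by
  choose f hf using hg
  have eq_of_tendsto {a v c} (h : Tendsto (fun i => g i a v) l (𝓝 c)) : f a v = c :=
    tendsto_nhds_unique (hf a v) h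
  let f₂ : X →ₗ[𝕜] E →ₗ[𝕜] G := LinearMap.mk₂ 𝕜 f
    (fun a b v => eq_of_tendsto (by simpa using (hf a v).add (hf b v)))
    (fun c a v => eq_of_tendsto (by simpa using (hf a v).const_smul c))
    (fun a v w => eq_of_tendsto (by simpa using (hf a v).add (hf a w)))
    (fun c a v => eq_of_tendsto (by simpa using (hf a v).const_smul c))
  refine ⟨f₂.mkContinuous₂ C fun a v => le_of_tendsto (hf a v).norm (.of_forall fun i => ?_), hf⟩
  calc ‖g i a v‖ ≤ ‖g i‖ * ‖a‖ * ‖v‖ := (g i).le_opNorm₂ a v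
    _ ≤ C * ‖a‖ * ‖v‖ := by gcongr; exact hgC i

theorem tendsto_apply_apply (T : X →L[𝕜] E →L[𝕜] G) (v : E) {ι : Type*} {l : Filter ι}
    {z : ι → X} {a : X} (hz : Tendsto z l (𝓝 a)) :
    Tendsto (fun i => T (z i) v) l (𝓝 (T a v)) :=
  ((T.flip v).continuous.tendsto a).comp hz

end ContinuousLinearMap

variable {𝕜 A E : Type*} [NontriviallyNormedField 𝕜] [NonUnitalNormedRing A] [NormedSpace 𝕜 A]
  [NormedAddCommGroup E] [NormedSpace 𝕜 E] {I : NonUnitalSubalgebra 𝕜 A}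
  (hI : ∀ a : A, ∀ x ∈ I, a * x ∈ I ∧ x * a ∈ I) {li ri : I →L[𝕜] E →L[𝕜] E}

-- `SubmoduleClass.toNormedSpace` cannot infer the scalar ring `𝕜` on its own.
instance NonUnitalSubalgebra.normedSpace (I : NonUnitalSubalgebra 𝕜 A) : NormedSpace 𝕜 I :=
  SubmoduleClass.toNormedSpace (R := 𝕜) I

section Construction

variable [IsScalarTower 𝕜 A A]

def mulRightIdeal (x : I) : A →L[𝕜] I :=
  LinearMap.mkContinuous
    { toFun a := ⟨a * x, (hI a x x.2).1⟩
      map_add' a b := Subtype.ext (add_mul a b x)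
      map_smul' c a := Subtype.ext (smul_mul_assoc c a x) }
    ‖x‖ fun a => (norm_mul_le a x).trans_eq (mul_comm _ _)

@[simp]
theorem coe_mulRightIdeal_apply (x : I) (a : A) : (mulRightIdeal hI x a : A) = a * x := rfl

theorem norm_mulRightIdeal_le (x : I) : ‖mulRightIdeal hI x‖ ≤ ‖x‖ :=
  LinearMap.mkContinuous_norm_le _ (norm_nonneg x) _

variable {ι : Type*} {l : Filter ι} {e : ι → I}

theorem tendsto_mulRightIdeal_mul (he : ∀ x : I, Tendsto (fun i => e i * x) l (𝓝 x)) (a : A)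
    (x : I) : Tendsto (fun i => mulRightIdeal hI (e i) a * x) l (𝓝 ⟨a * x, (hI a x x.2).1⟩) := by
  refine tendsto_subtype_rng.2 ?_
  simpa only [MulMemClass.coe_mul, coe_mulRightIdeal_apply, mul_assoc] using
    (tendsto_subtype_rng.1 (he x)).const_mul a

theorem tendsto_mul_mulRightIdeal (he : ∀ x : I, Tendsto (fun i => x * e i) l (𝓝 x)) (y : I)
    (a : A) : Tendsto (fun i => y * mulRightIdeal hI (e i) a) l (𝓝 ⟨y * a, (hI a y y.2).2⟩) := by
  refine tendsto_subtype_rng.2 ?_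
  simpa only [MulMemClass.coe_mul, coe_mulRightIdeal_apply, mul_assoc] using
    tendsto_subtype_rng.1 (he ⟨y * a, (hI a y y.2).2⟩)

variable {G : Type*} [NormedAddCommGroup G] [NormedSpace 𝕜 G]

theorem exists_tendsto_comp_mulRightIdeal [l.NeBot] {C : ℝ} (hC : ∀ i, ‖e i‖ ≤ C)
    (T : I →L[𝕜] E →L[𝕜] G)
    (hT : ∀ a v, ∃ c, Tendsto (fun i => T (mulRightIdeal hI (e i) a) v) l (𝓝 c)) :
    ∃ T' : A →L[𝕜] E →L[𝕜] G,
      ∀ a v, Tendsto (fun i => T (mulRightIdeal hI (e i) a) v) l (𝓝 (T' a v)) :=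
  ContinuousLinearMap.exists_tendsto_apply₂_of_norm_le (fun i => T.comp (mulRightIdeal hI (e i)))
    (fun i => (T.opNorm_comp_le _).trans <|
      mul_le_mul_of_nonneg_left ((norm_mulRightIdeal_le hI _).trans (hC i)) (norm_nonneg T)) hT

variable [l.NeBot] {C : ℝ}

theorem exists_left_extension (hC : ∀ i, ‖e i‖ ≤ C)
    (he : ∀ x : I, Tendsto (fun i => e i * x) l (𝓝 x))
    (hl : ∀ x y : I, ∀ v, li (x * y) v = li x (li y v)) (hli : ∀ v, ∃ x u, v = li x u) :
    ∃ L : A →L[𝕜] E →L[𝕜] E, ∀ a (x : I) u, L a (li x u) = li ⟨a * x, (hI a x x.2).1⟩ u := by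
  have lim (a : A) (x : I) (u : E) :
      Tendsto (fun i => li (mulRightIdeal hI (e i) a) (li x u)) l
        (𝓝 (li ⟨a * x, (hI a x x.2).1⟩ u)) := by
    simpa only [← hl] using li.tendsto_apply_apply u (tendsto_mulRightIdeal_mul hI he a x)
  obtain ⟨L, hL⟩ := exists_tendsto_comp_mulRightIdeal hI hC li fun a v => by
    obtain ⟨x, u, rfl⟩ := hli v
    exact ⟨_, lim a x u⟩
  exact ⟨L, fun a x u => tendsto_nhds_unique (hL a _) (lim a x u)⟩

theorem exists_right_extension (hC : ∀ i, ‖e i‖ ≤ C)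
    (he : ∀ x : I, Tendsto (fun i => x * e i) l (𝓝 x))
    (hr : ∀ x y : I, ∀ v, ri (x * y) v = ri y (ri x v)) (hri : ∀ v, ∃ y w, v = ri y w) :
    ∃ R : A →L[𝕜] E →L[𝕜] E, (∀ a (y : I) w, R a (ri y w) = ri ⟨y * a, (hI a y y.2).2⟩ w) ∧
      ∀ a u, Tendsto (fun i => ri (mulRightIdeal hI (e i) a) u) l (𝓝 (R a u)) := by
  have lim (a : A) (y : I) (w : E) :
      Tendsto (fun i => ri (mulRightIdeal hI (e i) a) (ri y w)) l
        (𝓝 (ri ⟨y * a, (hI a y y.2).2⟩ w)) := by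
    simpa only [← hr] using ri.tendsto_apply_apply w (tendsto_mul_mulRightIdeal hI he y a)
  obtain ⟨R, hR⟩ := exists_tendsto_comp_mulRightIdeal hI hC ri fun a v => by
    obtain ⟨y, w, rfl⟩ := hri v
    exact ⟨_, lim a y w⟩
  exact ⟨R, fun a y w => tendsto_nhds_unique (hR a _) (lim a y w), hR⟩

theorem exists_derivation_extension (hC : ∀ i, ‖e i‖ ≤ C)
    (he : ∀ x : I, Tendsto (fun i => e i * x) l (𝓝 x)) (hli : ∀ v, ∃ x u, v = li x u)
    (D : I →L[𝕜] StrongDual 𝕜 E)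
    (hD : ∀ x y : I, ∀ v, D (x * y) v = D x (li y v) + D y (ri x v)) (R : A →L[𝕜] E →L[𝕜] E)
    (hR : ∀ a u, Tendsto (fun i => ri (mulRightIdeal hI (e i) a) u) l (𝓝 (R a u))) :
    ∃ D' : A →L[𝕜] StrongDual 𝕜 E,
      ∀ a (x : I) u, D' a (li x u) = D ⟨a * x, (hI a x x.2).1⟩ u - D x (R a u) := by
  have lim (a : A) (x : I) (u : E) :
      Tendsto (fun i => D (mulRightIdeal hI (e i) a) (li x u)) l
        (𝓝 (D ⟨a * x, (hI a x x.2).1⟩ u - D x (R a u))) := by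
    have leibniz (z : I) : D z (li x u) = D (z * x) u - D x (ri z u) :=
      eq_sub_of_add_eq (hD z x u).symm
    simpa only [leibniz, Function.comp_def] using
      (D.tendsto_apply_apply u (tendsto_mulRightIdeal_mul hI he a x)).sub
        (((D x).continuous.tendsto _).comp (hR a u))
  obtain ⟨D', hD'⟩ := exists_tendsto_comp_mulRightIdeal hI hC D fun a v => by
    obtain ⟨x, u, rfl⟩ := hli v
    exact ⟨_, lim a x u⟩
  exact ⟨D', fun a x u => tendsto_nhds_unique (hD' a _) (lim a x u)⟩

end Construction

section Extension

variable {L R : A →L[𝕜] E →L[𝕜] E}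

theorem apply_mul_of_apply_li
    (hL : ∀ a (x : I) u, L a (li x u) = li ⟨a * x, (hI a x x.2).1⟩ u)
    (hli : ∀ v, ∃ x u, v = li x u) (a b : A) (v : E) : L (a * b) v = L a (L b v) := by
  obtain ⟨x, u, rfl⟩ := hli v
  simp only [hL, mul_assoc]

theorem apply_mul_of_apply_ri
    (hR : ∀ a (y : I) w, R a (ri y w) = ri ⟨y * a, (hI a y y.2).2⟩ w)
    (hri : ∀ v, ∃ y w, v = ri y w) (a b : A) (v : E) : R (a * b) v = R b (R a v) := by
  obtain ⟨y, w, rfl⟩ := hri v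
  simp only [hR, mul_assoc]

theorem apply_li_of_apply_ri
    (hR : ∀ a (y : I) w, R a (ri y w) = ri ⟨y * a, (hI a y y.2).2⟩ w)
    (hlr : ∀ x y : I, ∀ v, li x (ri y v) = ri y (li x v))
    (hri : ∀ v, ∃ y w, v = ri y w) (a : A) (x : I) (u : E) : R a (li x u) = li x (R a u) := by
  obtain ⟨y, w, rfl⟩ := hri u
  simp only [hlr, hR]

theorem apply_apply_comm_of_apply_li
    (hL : ∀ a (x : I) u, L a (li x u) = li ⟨a * x, (hI a x x.2).1⟩ u)
    (hRL : ∀ a (x : I) u, R a (li x u) = li x (R a u))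
    (hli : ∀ v, ∃ x u, v = li x u) (a b : A) (v : E) : L a (R b v) = R b (L a v) := by
  obtain ⟨x, u, rfl⟩ := hli v
  simp only [hL, hRL]

theorem apply_coe_of_apply_li
    (hL : ∀ a (x : I) u, L a (li x u) = li ⟨a * x, (hI a x x.2).1⟩ u)
    (hl : ∀ x y : I, ∀ v, li (x * y) v = li x (li y v))
    (hli : ∀ v, ∃ x u, v = li x u) (x : I) (v : E) : L x v = li x v := by
  obtain ⟨y, u, rfl⟩ := hli v
  exact (hL x y u).trans (hl x y u)

theorem apply_coe_of_apply_ri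
    (hR : ∀ a (y : I) w, R a (ri y w) = ri ⟨y * a, (hI a y y.2).2⟩ w)
    (hr : ∀ x y : I, ∀ v, ri (x * y) v = ri y (ri x v))
    (hri : ∀ v, ∃ y w, v = ri y w) (x : I) (v : E) : R x v = ri x v := by
  obtain ⟨y, w, rfl⟩ := hri v
  exact (hR x y w).trans (hr y x w)

variable {D' : A →L[𝕜] StrongDual 𝕜 E} {D : I →L[𝕜] StrongDual 𝕜 E}

theorem derivation_apply_coe
    (hD' : ∀ a (x : I) u, D' a (li x u) = D ⟨a * x, (hI a x x.2).1⟩ u - D x (R a u))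
    (hRI : ∀ (x : I) v, R x v = ri x v)
    (hD : ∀ x y : I, ∀ v, D (x * y) v = D x (li y v) + D y (ri x v))
    (hli : ∀ v, ∃ x u, v = li x u) (x : I) : D' x = D x := by
  ext v
  obtain ⟨y, u, rfl⟩ := hli v
  rw [hD', hRI, sub_eq_iff_eq_add]
  exact hD x y u

theorem derivation_apply_mul
    (hD' : ∀ a (x : I) u, D' a (li x u) = D ⟨a * x, (hI a x x.2).1⟩ u - D x (R a u))
    (hL : ∀ a (x : I) u, L a (li x u) = li ⟨a * x, (hI a x x.2).1⟩ u)
    (hRL : ∀ a (x : I) u, R a (li x u) = li x (R a u))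
    (hRmul : ∀ a b v, R (a * b) v = R b (R a v))
    (hli : ∀ v, ∃ x u, v = li x u) (a b : A) (v : E) :
    D' (a * b) v = D' a (L b v) + D' b (R a v) := by
  obtain ⟨x, u, rfl⟩ := hli v
  simp only [hD', hL, hRL, hRmul, mul_assoc]
  ring

theorem tendsto_apply_of_apply_ri
    (hR : ∀ a (y : I) w, R a (ri y w) = ri ⟨y * a, (hI a y y.2).2⟩ w)
    (hri : ∀ v, ∃ y w, v = ri y w) {κ : Type*} {F : Filter κ} {f : κ → A} {a : A}
    (hf : ∀ y : I, Tendsto (fun i => (y : A) * f i) F (𝓝 (y * a))) (v : E) :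
    Tendsto (fun i => R (f i) v) F (𝓝 (R a v)) := by
  obtain ⟨y, w, rfl⟩ := hri v
  simp only [hR]
  exact ri.tendsto_apply_apply w (tendsto_subtype_rng.2 (hf y))

theorem tendsto_derivation_apply
    (hD' : ∀ a (x : I) u, D' a (li x u) = D ⟨a * x, (hI a x x.2).1⟩ u - D x (R a u))
    (hli : ∀ v, ∃ x u, v = li x u) {κ : Type*} {F : Filter κ} {f : κ → A} {a : A}
    (hf : ∀ x : I, Tendsto (fun i => f i * x) F (𝓝 (a * x)))
    (hR : ∀ u, Tendsto (fun i => R (f i) u) F (𝓝 (R a u))) (v : E) :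
    Tendsto (fun i => D' (f i) v) F (𝓝 (D' a v)) := by
  obtain ⟨x, u, rfl⟩ := hli v
  simp only [hD']
  exact (D.tendsto_apply_apply u (tendsto_subtype_rng.2 (hf x))).sub
    (((D x).continuous.tendsto _).comp (hR u))

end Extension

theorem statement1_general (A : Type) [NonUnitalNormedRing A] [NormedSpace ℂ A]
    [IsScalarTower ℂ A A]
    (I : NonUnitalSubalgebra ℂ A)
    (hideal : ∀ a : A, ∀ x ∈ I, a * x ∈ I ∧ x * a ∈ I)
    -- `I` has a bounded approximate identity:
    (hbai : ∃ (ι : Type) (F : Filter ι) (e : ι → I), F.NeBot ∧ (∃ C, ∀ i, ‖e i‖ ≤ C) ∧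
      ∀ x : I, Tendsto (fun i => e i * x) F (𝓝 x) ∧ Tendsto (fun i => x * e i) F (𝓝 x))
    (E : Type) [NormedAddCommGroup E] [NormedSpace ℂ E]
    -- the Banach `I`-bimodule structure on `E`:
    (li ri : I →L[ℂ] E →L[ℂ] E)
    (hl : ∀ x y : I, ∀ v, li (x * y) v = li x (li y v))
    (hr : ∀ x y : I, ∀ v, ri (x * y) v = ri y (ri x v))
    (hlr : ∀ x y : I, ∀ v, li x (ri y v) = ri y (li x v))
    -- pseudo-unitality:
    (hpu : ∀ v : E, ∃ (x y : I) (w : E), v = li x (ri y w))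
    -- the derivation:
    (D : I →L[ℂ] StrongDual ℂ E)
    (hD : ∀ x y : I, ∀ v, D (x * y) v = D x (li y v) + D y (ri x v)) :
    ∃ (L R : A →L[ℂ] E →L[ℂ] E) (D' : A →L[ℂ] StrongDual ℂ E),
      -- `L`, `R` make `E` a Banach `A`-bimodule …
      (∀ a b : A, ∀ v, L (a * b) v = L a (L b v)) ∧
      (∀ a b : A, ∀ v, R (a * b) v = R b (R a v)) ∧
      (∀ a b : A, ∀ v, L a (R b v) = R b (L a v)) ∧
      -- … extending the `I`-actions canonically:
      (∀ x : I, ∀ v, L (x : A) v = li x v ∧ R (x : A) v = ri x v) ∧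
      (∀ a : A, ∀ x : I, ∀ v, L a (li x v) = li ⟨a * (x : A), (hideal a x x.2).1⟩ v) ∧
      (∀ a : A, ∀ x : I, ∀ v, R a (ri x v) = ri ⟨(x : A) * a, (hideal a x x.2).2⟩ v) ∧
      -- `D'` is a derivation extending `D` …
      (∀ x : I, D' (x : A) = D x) ∧
      (∀ a b : A, ∀ v, D' (a * b) v = D' a (L b v) + D' b (R a v)) ∧
      -- … which is `I`-strict-to-weak-* continuous:
      (∀ (κ : Type) (F : Filter κ) (f : κ → A) (a : A),
        (∀ x : I, Tendsto (fun i => f i * (x : A)) F (𝓝 (a * x)) ∧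
          Tendsto (fun i => (x : A) * f i) F (𝓝 ((x : A) * a))) →
        ∀ v : E, Tendsto (fun i => D' (f i) v) F (𝓝 (D' a v))) := by
  obtain ⟨ι, F, e, hF, ⟨C, hC⟩, he⟩ := hbai
  have hli : ∀ v, ∃ x u, v = li x u := fun v =>
    let ⟨x, y, w, hv⟩ := hpu v; ⟨x, ri y w, hv⟩
  have hri : ∀ v, ∃ y w, v = ri y w := fun v =>
    let ⟨x, y, w, hv⟩ := hpu v; ⟨y, li x w, hv.trans (hlr x y w)⟩
  obtain ⟨L, hL⟩ := exists_left_extension hideal hC (fun x => (he x).1) hl hli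
  obtain ⟨R, hR, hR_lim⟩ := exists_right_extension hideal hC (fun x => (he x).2) hr hri
  obtain ⟨D', hD'⟩ :=
    exists_derivation_extension hideal hC (fun x => (he x).1) hli D hD R hR_lim
  have hRL := apply_li_of_apply_ri hideal hR hlr hri
  have hRmul := apply_mul_of_apply_ri hideal hR hri
  have hRI := apply_coe_of_apply_ri hideal hR hr hri
  refine ⟨L, R, D', apply_mul_of_apply_li hideal hL hli, hRmul,
    apply_apply_comm_of_apply_li hideal hL hRL hli,
    fun x v => ⟨apply_coe_of_apply_li hideal hL hl hli x v, hRI x v⟩, hL, hR,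
    derivation_apply_coe hideal hD' hRI hD hli, derivation_apply_mul hideal hD' hL hRL hRmul hli,
    fun κ F f a hf => tendsto_derivation_apply hideal hD' hli (fun x => (hf x).1)
      (tendsto_apply_of_apply_ri hideal hR hri fun y => (hf y).2)⟩

/-- Let `A` be a Banach algebra, `I` a closed (two-sided) ideal of `A` with a
bounded approximate identity, `E` a pseudo-unital Banach `I`-bimodule (with actions `li`, `ri`),
and `D : I → E⋆` a bounded derivation.  Then the module actions extend canonically to `A`, making
`E` a Banach `A`-bimodule, and there is a bounded derivation `D' : A → E⋆` extending `D` which is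
continuous from the `I`-strict topology on `A` to the weak-* topology on `E⋆`. -/
theorem statement1 (A : Type) [NonUnitalNormedRing A] [NormedSpace ℂ A]
    [IsScalarTower ℂ A A] [SMulCommClass ℂ A A] [CompleteSpace A]
    (I : NonUnitalSubalgebra ℂ A) (hclosed : IsClosed (I : Set A))
    (hideal : ∀ a : A, ∀ x ∈ I, a * x ∈ I ∧ x * a ∈ I)
    -- `I` has a bounded approximate identity:
    (hbai : ∃ (ι : Type) (F : Filter ι) (e : ι → I), F.NeBot ∧ (∃ C, ∀ i, ‖e i‖ ≤ C) ∧
      ∀ x : I, Tendsto (fun i => e i * x) F (𝓝 x) ∧ Tendsto (fun i => x * e i) F (𝓝 x))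
    (E : Type) [NormedAddCommGroup E] [NormedSpace ℂ E] [CompleteSpace E]
    -- the Banach `I`-bimodule structure on `E`:
    (li ri : I →L[ℂ] E →L[ℂ] E)
    (hl : ∀ x y : I, ∀ v, li (x * y) v = li x (li y v))
    (hr : ∀ x y : I, ∀ v, ri (x * y) v = ri y (ri x v))
    (hlr : ∀ x y : I, ∀ v, li x (ri y v) = ri y (li x v))
    -- pseudo-unitality:
    (hpu : ∀ v : E, ∃ (x y : I) (w : E), v = li x (ri y w))
    -- the derivation:
    (D : I →L[ℂ] StrongDual ℂ E)
    (hD : ∀ x y : I, ∀ v, D (x * y) v = D x (li y v) + D y (ri x v)) :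
    ∃ (L R : A →L[ℂ] E →L[ℂ] E) (D' : A →L[ℂ] StrongDual ℂ E),
      -- `L`, `R` make `E` a Banach `A`-bimodule …
      (∀ a b : A, ∀ v, L (a * b) v = L a (L b v)) ∧
      (∀ a b : A, ∀ v, R (a * b) v = R b (R a v)) ∧
      (∀ a b : A, ∀ v, L a (R b v) = R b (L a v)) ∧
      -- … extending the `I`-actions canonically:
      (∀ x : I, ∀ v, L (x : A) v = li x v ∧ R (x : A) v = ri x v) ∧
      (∀ a : A, ∀ x : I, ∀ v, L a (li x v) = li ⟨a * (x : A), (hideal a x x.2).1⟩ v) ∧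
      (∀ a : A, ∀ x : I, ∀ v, R a (ri x v) = ri ⟨(x : A) * a, (hideal a x x.2).2⟩ v) ∧
      -- `D'` is a derivation extending `D` …
      (∀ x : I, D' (x : A) = D x) ∧
      (∀ a b : A, ∀ v, D' (a * b) v = D' a (L b v) + D' b (R a v)) ∧
      -- … which is `I`-strict-to-weak-* continuous:
      (∀ (κ : Type) (F : Filter κ) (f : κ → A) (a : A),
        (∀ x : I, Tendsto (fun i => f i * (x : A)) F (𝓝 (a * x)) ∧
          Tendsto (fun i => (x : A) * f i) F (𝓝 ((x : A) * a))) →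
        ∀ v : E, Tendsto (fun i => D' (f i) v) F (𝓝 (D' a v))) :=
  statement1_general A I hideal hbai E li ri hl hr hlr hpu D hD
end

section
/- Let A be a Banach algebra, let I be a closed ideal of A with an approximate identity bounded by C, and let E be a pseudo-unital Banach I-bimodule with the I-action bounded by κ. Then the canonical extended left module action of A on E satisfies ‖a·x‖ ≤ κC‖a‖‖x‖ for all a ∈ A, x ∈ E. -/
open Filter Topology

/-!
Pseudo-unitality lets every `v` be written as `x · w` with `x ∈ I`, so the approximate identity
satisfies `e i · v → v`. Hence `a · v = lim a · (e i · v) = lim (a * e i) · v`, and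
`‖(a * e i) · v‖ ≤ κ ‖a * e i‖ ‖v‖ ≤ κ C ‖a‖ ‖v‖`. A negative `κ` forces `E = 0`.
-/

theorem tendsto_apply_of_tendsto_mul_left {𝕜 B E ι : Type*} [NontriviallyNormedField 𝕜]
    [TopologicalSpace B] [AddCommMonoid B] [Module 𝕜 B] [Mul B]
    [NormedAddCommGroup E] [NormedSpace 𝕜 E] (li : B →L[𝕜] E →L[𝕜] E)
    (hl : ∀ x y : B, ∀ v, li (x * y) v = li x (li y v))
    (hfact : ∀ v : E, ∃ (x : B) (w : E), v = li x w)
    {F : Filter ι} {e : ι → B} (he : ∀ x, Tendsto (fun i => e i * x) F (𝓝 x)) (v : E) :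
    Tendsto (fun i => li (e i) v) F (𝓝 v) := by
  obtain ⟨x, w, rfl⟩ := hfact v
  have hcont : Continuous fun z : B => li z w := li.continuous.clm_apply continuous_const
  simpa only [Function.comp_def, hl] using (hcont.tendsto x).comp (he x)

theorem eq_zero_of_norm_apply_le_of_neg {B E : Type*} [NormedAddCommGroup E]
    [SeminormedAddCommGroup B] (li : B → E → E) {κ : ℝ} (hκ0 : κ < 0)
    (hκ : ∀ (x : B) (v : E), ‖li x v‖ ≤ κ * ‖x‖ * ‖v‖)
    (hfact : ∀ v : E, ∃ (x : B) (w : E), v = li x w) (v : E) : v = 0 := by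
  obtain ⟨x, w, rfl⟩ := hfact v
  refine norm_le_zero_iff.mp ((hκ x w).trans ?_)
  exact mul_nonpos_of_nonpos_of_nonneg
    (mul_nonpos_of_nonpos_of_nonneg hκ0.le (norm_nonneg x)) (norm_nonneg w)

theorem statement2_general (A : Type) [NonUnitalNormedRing A] [NormedSpace ℂ A]
    (I : NonUnitalSubalgebra ℂ A)
    (hideal : ∀ a : A, ∀ x ∈ I, a * x ∈ I ∧ x * a ∈ I)
    (C : ℝ)
    -- `I` has an approximate identity bounded by `C`:
    (ι : Type) (F : Filter ι) (e : ι → I) (hne : F.NeBot) (hC : ∀ i, ‖e i‖ ≤ C)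
    (happrox : ∀ x : I, Tendsto (fun i => e i * x) F (𝓝 x) ∧ Tendsto (fun i => x * e i) F (𝓝 x))
    (E : Type) [NormedAddCommGroup E] [NormedSpace ℂ E]
    -- the Banach `I`-bimodule structure on `E`, with left action bounded by `κ`:
    (li ri : I →L[ℂ] E →L[ℂ] E) (κ : ℝ)
    (hκ : ∀ (x : I) (v : E), ‖li x v‖ ≤ κ * ‖x‖ * ‖v‖)
    (hl : ∀ x y : I, ∀ v, li (x * y) v = li x (li y v))
    -- pseudo-unitality:
    (hpu : ∀ v : E, ∃ (x y : I) (w : E), v = li x (ri y w))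
    -- the canonically extended left action `L` of `A` on `E`:
    (L : A →L[ℂ] E →L[ℂ] E)
    (hL : ∀ a : A, ∀ x : I, ∀ v, L a (li x v) = li ⟨a * (x : A), (hideal a x x.2).1⟩ v) :
    ∀ (a : A) (v : E), ‖L a v‖ ≤ κ * C * (‖a‖ * ‖v‖) := by
  intro a v
  have hfact : ∀ v : E, ∃ (x : I) (w : E), v = li x w := fun v =>
    let ⟨x, y, w, h⟩ := hpu v; ⟨x, ri y w, h⟩
  rcases lt_or_ge κ 0 with hκ0 | hκ0
  · obtain rfl := eq_zero_of_norm_apply_le_of_neg (li · ·) hκ0 hκ hfact v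
    simp
  have hlim : Tendsto (fun i => L a (li (e i) v)) F (𝓝 (L a v)) :=
    ((L a).continuous.tendsto v).comp
      (tendsto_apply_of_tendsto_mul_left li hl hfact (fun x => (happrox x).1) v)
  refine le_of_tendsto hlim.norm (Eventually.of_forall fun i => ?_)
  rw [hL]
  calc ‖li ⟨a * (e i : A), _⟩ v‖ ≤ κ * ‖a * (e i : A)‖ * ‖v‖ := hκ _ v
    _ ≤ κ * (‖a‖ * C) * ‖v‖ := by gcongr; exact (norm_mul_le _ _).trans (by gcongr; exact hC i)
    _ = κ * C * (‖a‖ * ‖v‖) := by ring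

/-- Let `A` be a Banach algebra, `I` a closed ideal of `A` with an approximate
identity bounded by `C`, and `E` a pseudo-unital Banach `I`-bimodule whose left `I`-action is
bounded by `κ`.  Then the canonical extended left action `L` of `A` on `E` (characterized by
`a · (b · x) = (ab) · x` for `b ∈ I`) satisfies `‖a · x‖ ≤ κ C ‖a‖ ‖x‖`. -/
theorem statement2 (A : Type) [NonUnitalNormedRing A] [NormedSpace ℂ A]
    [IsScalarTower ℂ A A] [SMulCommClass ℂ A A] [CompleteSpace A]
    (I : NonUnitalSubalgebra ℂ A) (hclosed : IsClosed (I : Set A))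
    (hideal : ∀ a : A, ∀ x ∈ I, a * x ∈ I ∧ x * a ∈ I)
    (C : ℝ)
    -- `I` has an approximate identity bounded by `C`:
    (ι : Type) (F : Filter ι) (e : ι → I) (hne : F.NeBot) (hC : ∀ i, ‖e i‖ ≤ C)
    (happrox : ∀ x : I, Tendsto (fun i => e i * x) F (𝓝 x) ∧ Tendsto (fun i => x * e i) F (𝓝 x))
    (E : Type) [NormedAddCommGroup E] [NormedSpace ℂ E] [CompleteSpace E]
    -- the Banach `I`-bimodule structure on `E`, with left action bounded by `κ`:
    (li ri : I →L[ℂ] E →L[ℂ] E) (κ : ℝ)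
    (hκ : ∀ (x : I) (v : E), ‖li x v‖ ≤ κ * ‖x‖ * ‖v‖)
    (hl : ∀ x y : I, ∀ v, li (x * y) v = li x (li y v))
    (hr : ∀ x y : I, ∀ v, ri (x * y) v = ri y (ri x v))
    (hlr : ∀ x y : I, ∀ v, li x (ri y v) = ri y (li x v))
    -- pseudo-unitality:
    (hpu : ∀ v : E, ∃ (x y : I) (w : E), v = li x (ri y w))
    -- the canonically extended left action `L` of `A` on `E`:
    (L : A →L[ℂ] E →L[ℂ] E)
    (hL : ∀ a : A, ∀ x : I, ∀ v, L a (li x v) = li ⟨a * (x : A), (hideal a x x.2).1⟩ v) :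
    ∀ (a : A) (v : E), ‖L a v‖ ≤ κ * C * (‖a‖ * ‖v‖) :=
  statement2_general A I hideal C ι F e hne hC happrox E li ri κ hκ hl hpu L hL
end

section
/- Let A be a commutative semisimple Banach algebra. If the character space of A is discrete and A is Tauberian, then for every a ∈ A the left multiplication operator L_a : A → A is a norm limit of finite rank operators. -/
open Filter Topology WeakDual

/-- Let `A` be a commutative semisimple Banach algebra whose character space is
discrete and which is Tauberian.  Then, for every `a ∈ A`, left multiplication `L_a` is a norm
limit of finite rank operators. -/
theorem statement3 (A : Type) [NonUnitalNormedCommRing A] [NormedSpace ℂ A]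
    [IsScalarTower ℂ A A] [SMulCommClass ℂ A A] [CompleteSpace A]
    -- semisimplicity: the Gelfand transform is injective
    (hss : ∀ a : A, (∀ φ : characterSpace ℂ A, φ a = 0) → a = 0)
    -- the character space is discrete
    (hdisc : DiscreteTopology (characterSpace ℂ A))
    -- Tauberian: elements with compactly supported Gelfand transform are dense
    (htaub : Dense {a : A | HasCompactSupport fun φ : characterSpace ℂ A => φ a}) :
    ∀ a : A, (ContinuousLinearMap.mul ℂ A a) ∈
      closure {T : A →L[ℂ] A | FiniteDimensional ℂ (LinearMap.range (T : A →ₗ[ℂ] A))} := by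
  have key : ∀ b : A, (HasCompactSupport fun φ : characterSpace ℂ A => φ b) →
      FiniteDimensional ℂ
        (LinearMap.range ((ContinuousLinearMap.mul ℂ A b : A →L[ℂ] A) : A →ₗ[ℂ] A)) := by
    intro b hb
    have hfin : {φ : characterSpace ℂ A | φ b ≠ 0}.Finite :=
      (hb.isCompact.finite_of_discrete).subset (subset_tsupport _)
    haveI : Fintype {φ : characterSpace ℂ A | φ b ≠ 0} := hfin.fintype
    -- the linear map collecting the values of the characters in the support
    let f : A →ₗ[ℂ] ({φ : characterSpace ℂ A | φ b ≠ 0} → ℂ) :=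
      { toFun := fun x φ => φ.1 x
        map_add' := by intro x y; ext φ; simp
        map_smul' := by intro c x; ext φ; simp }
    have hker : LinearMap.ker f ≤
        LinearMap.ker ((ContinuousLinearMap.mul ℂ A b : A →L[ℂ] A) : A →ₗ[ℂ] A) := by
      intro x hx
      have hx' : ∀ φ : {φ : characterSpace ℂ A | φ b ≠ 0}, φ.1 x = 0 := fun φ =>
        congrFun (by exact hx) φ
      have : b * x = 0 := by
        apply hss
        intro φ
        rw [map_mul]
        by_cases h : φ b = 0
        · rw [h, zero_mul]
        · rw [hx' ⟨φ, h⟩, mul_zero]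
      simpa [LinearMap.mem_ker] using this
    -- A ⧸ ker f is finite dimensional
    haveI h1 : FiniteDimensional ℂ (A ⧸ LinearMap.ker f) := by
      have hinj : Function.Injective ((LinearMap.ker f).liftQ f le_rfl) := by
        rw [← LinearMap.ker_eq_bot, Submodule.ker_liftQ_eq_bot _ _ _ le_rfl]
      exact FiniteDimensional.of_injective _ hinj
    -- quotient map between the quotients
    let g := (LinearMap.ker f).mapQ
      (LinearMap.ker ((ContinuousLinearMap.mul ℂ A b : A →L[ℂ] A) : A →ₗ[ℂ] A))
      LinearMap.id (by simpa using hker)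
    have hgsurj : Function.Surjective g := by
      intro y
      obtain ⟨x, rfl⟩ := Submodule.mkQ_surjective _ y
      exact ⟨(LinearMap.ker f).mkQ x, by simp [g, Submodule.mapQ_apply]⟩
    haveI h2 : FiniteDimensional ℂ
        (A ⧸ LinearMap.ker ((ContinuousLinearMap.mul ℂ A b : A →L[ℂ] A) : A →ₗ[ℂ] A)) :=
      Module.Finite.of_surjective g hgsurj
    exact Module.Finite.equiv
      ((ContinuousLinearMap.mul ℂ A b : A →L[ℂ] A) : A →ₗ[ℂ] A).quotKerEquivRange
  intro a
  rw [Metric.mem_closure_iff]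
  intro ε hε
  obtain ⟨b, hb, hdist⟩ := Metric.mem_closure_iff.mp (htaub a) ε hε
  refine ⟨ContinuousLinearMap.mul ℂ A b, key b hb, ?_⟩
  have : ContinuousLinearMap.mul ℂ A a - ContinuousLinearMap.mul ℂ A b
      = ContinuousLinearMap.mul ℂ A (a - b) := by
    ext x; simp [sub_mul]
  calc dist (ContinuousLinearMap.mul ℂ A a) (ContinuousLinearMap.mul ℂ A b)
      = ‖ContinuousLinearMap.mul ℂ A (a - b)‖ := by rw [dist_eq_norm, this]
    _ ≤ ‖a - b‖ := ContinuousLinearMap.opNorm_mul_apply_le ℂ A (a - b)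
    _ < ε := by rwa [← dist_eq_norm]
end

section
/- Let A be a commutative, semisimple, Tauberian Banach algebra with discrete character space and a bounded approximate identity. If A is amenable then A is biprojective. -/
open Filter Topology NormedSpace

/-- A Banach `A`-bimodule: completely determined by bounded left/right actions. -/
structure BBimod (A : Type) [NonUnitalNormedRing A] [NormedSpace ℂ A]
    (E : Type) [NormedAddCommGroup E] [NormedSpace ℂ E] where
  l : A →L[ℂ] E →L[ℂ] E
  r : A →L[ℂ] E →L[ℂ] E
  l_mul : ∀ a b x, l (a * b) x = l a (l b x)
  r_mul : ∀ a b x, r (a * b) x = r b (r a x)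
  lr : ∀ a b x, l a (r b x) = r b (l a x)

variable {A : Type} [NonUnitalNormedRing A] [NormedSpace ℂ A]
variable {E : Type} [NormedAddCommGroup E] [NormedSpace ℂ E]

/-- `D` is a derivation from `A` into the dual bimodule `E⋆` of `E`:
`D(ab) = a·D(b) + D(a)·b`, where `(a·φ)(x) = φ(x·a)` and `(φ·a)(x) = φ(a·x)`. -/
def BBimod.IsDualDerivation (M : BBimod A E) (D : A →L[ℂ] StrongDual ℂ E) : Prop :=
  ∀ a b x, D (a * b) x = D a (M.l b x) + D b (M.r a x)

/-- `D` is inner: `D a = a·φ - φ·a` for some `φ ∈ E⋆`. -/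
def BBimod.IsInner (M : BBimod A E) (D : A →L[ℂ] StrongDual ℂ E) : Prop :=
  ∃ φ : StrongDual ℂ E, ∀ a x, D a x = φ (M.r a x) - φ (M.l a x)

/-- `E` is pseudo-unital: `E = {a · x · b : a, b ∈ A, x ∈ E}`. -/
def BBimod.PseudoUnital (M : BBimod A E) : Prop :=
  ∀ x : E, ∃ a b y, x = M.l a (M.r b y)

/-- `A` is amenable: every bounded derivation into a dual Banach bimodule is inner. -/
def Amenable (A : Type) [NonUnitalNormedRing A] [NormedSpace ℂ A] : Prop :=
  ∀ (E : Type) [NormedAddCommGroup E] [NormedSpace ℂ E] [CompleteSpace E]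
    (M : BBimod A E) (D : A →L[ℂ] StrongDual ℂ E),
    M.IsDualDerivation D → M.IsInner D

/-- `A` has a bounded approximate identity. -/
def BAI (A : Type) [NonUnitalNormedRing A] : Prop :=
  ∃ (ι : Type) (F : Filter ι) (e : ι → A), F.NeBot ∧ (∃ C, ∀ i, ‖e i‖ ≤ C) ∧
    ∀ a : A, Tendsto (fun i => e i * a) F (𝓝 a) ∧ Tendsto (fun i => a * e i) F (𝓝 a)

/-- `(X, t)` is the projective tensor product `E ⊗̂ F` of Banach spaces: `t` is a contractive
bilinear map with dense span satisfying the universal property for bounded bilinear maps. -/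
structure IsProjTensor (E F X : Type) [NormedAddCommGroup E] [NormedSpace ℂ E]
    [NormedAddCommGroup F] [NormedSpace ℂ F] [NormedAddCommGroup X] [NormedSpace ℂ X]
    (t : E →L[ℂ] F →L[ℂ] X) : Prop where
  span_dense : Dense ((Submodule.span ℂ {z : X | ∃ e f, t e f = z} : Submodule ℂ X) : Set X)
  norm_le : ∀ e f, ‖t e f‖ ≤ ‖e‖ * ‖f‖
  lift : ∀ (Y : Type) [NormedAddCommGroup Y] [NormedSpace ℂ Y] [CompleteSpace Y]
    (b : E →L[ℂ] F →L[ℂ] Y), ∃ T : X →L[ℂ] Y, ‖T‖ ≤ ‖b‖ ∧ ∀ e f, T (t e f) = b e f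

/-!
Amenability and the bounded approximate identity `(eᵢ)` give a virtual diagonal
`m ∈ (A ⊗̂ A)**`: a weak-* cluster point `N` of `eᵢ ⊗ eᵢ` satisfies `Δ**(N)·a = a`, the
derivation `a ↦ a·N - N·a` vanishes on the closure `K` of `range Δ⋆`, hence is a derivation into
`(X⋆ ⧸ K)⋆`, and subtracting the functional that makes it inner leaves `m` with `a·m = m·a`.
Then `a ↦ a·m` is a bounded bimodule map `A → (A ⊗̂ A)**` splitting `Δ`, and it remains to see
that it takes values in `A ⊗̂ A`. Discreteness of the character space, the Tauberian property
and semisimplicity provide for every character `φ` an element `u_φ` with `u_φ b = φ(b) u_φ`, so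
`u_φ·m = u_φ·m·u_φ = u_φ ⊗ u_φ`; the `u_φ` span a dense subspace of `A`, and `A ⊗̂ A` is closed
in its bidual.
-/

namespace WeakDual.CharacterSpace

variable {B : Type} [NonUnitalNormedCommRing B] [NormedSpace ℂ B]

theorem exists_apply_ne_zero (φ : characterSpace ℂ B) : ∃ a, φ a ≠ 0 := by
  by_contra! h
  exact φ.prop.1 (DFunLike.ext _ _ h)

theorem exists_apply_ne_zero_apply_eq_zero {φ ψ : characterSpace ℂ B} (h : ψ ≠ φ) :
    ∃ c, φ c ≠ 0 ∧ ψ c = 0 := by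
  obtain ⟨a, ha⟩ := exists_apply_ne_zero φ
  obtain ⟨d, hd⟩ : ∃ d, φ d ≠ ψ d := by
    by_contra! hd
    exact h (ext fun d => (hd d).symm)
  refine ⟨a * d - ψ d • a, ?_, ?_⟩ <;> simp only [map_sub, map_mul, map_smul, smul_eq_mul]
  · rw [mul_comm (ψ d), ← mul_sub]
    exact mul_ne_zero ha (sub_ne_zero.mpr hd)
  · ring

theorem exists_apply_ne_zero_forall_mem_apply_eq_zero (φ : characterSpace ℂ B)
    (T : Finset (characterSpace ℂ B)) (hT : φ ∉ T) :
    ∃ v, φ v ≠ 0 ∧ ∀ ψ ∈ T, ψ v = 0 := by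
  classical
  induction T using Finset.induction_on with
  | empty => simpa using exists_apply_ne_zero φ
  | insert ψ T _ ih =>
    rw [Finset.mem_insert, not_or] at hT
    obtain ⟨v, hv, hvT⟩ := ih hT.2
    obtain ⟨c, hc, hψc⟩ := exists_apply_ne_zero_apply_eq_zero (Ne.symm hT.1)
    refine ⟨v * c, by simpa using mul_ne_zero hv hc, ?_⟩
    simp_all

theorem exists_apply_eq_one_forall_ne_apply_eq_zero [DiscreteTopology (characterSpace ℂ B)]
    (htaub : Dense {a : B | HasCompactSupport fun φ : characterSpace ℂ B => φ a})
    (φ : characterSpace ℂ B) :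
    ∃ u : B, φ u = 1 ∧ ∀ ψ : characterSpace ℂ B, ψ ≠ φ → ψ u = 0 := by
  classical
  obtain ⟨a, ha, hφa⟩ := htaub.exists_mem_open (isOpen_ne_fun (map_continuous φ) continuous_const)
    (exists_apply_ne_zero φ)
  have hfin : (Function.support fun ψ : characterSpace ℂ B => ψ a).Finite :=
    ha.finite_of_discrete.subset (subset_tsupport _)
  obtain ⟨v, hv, hvT⟩ :=
    exists_apply_ne_zero_forall_mem_apply_eq_zero φ (hfin.toFinset.erase φ) (by simp)
  refine ⟨(φ (a * v))⁻¹ • (a * v), ?_, fun ψ hψ => ?_⟩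
  · rw [map_smul, smul_eq_mul, inv_mul_cancel₀ (by simpa using mul_ne_zero hφa hv)]
  by_cases hψa : ψ a = 0
  · simp [hψa]
  · simp [hvT ψ (by simp [hψ, hψa])]

section Semisimple

variable (hss : ∀ a : B, (∀ φ : characterSpace ℂ B, φ a = 0) → a = 0)
include hss

theorem mul_eq_smul_of_apply_eq_one {φ : characterSpace ℂ B} {u : B} (hu1 : φ u = 1)
    (hu0 : ∀ ψ : characterSpace ℂ B, ψ ≠ φ → ψ u = 0) (b : B) : u * b = φ b • u := by
  refine sub_eq_zero.mp (hss _ fun ψ => ?_)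
  by_cases hψ : ψ = φ
  · simp [hψ, hu1, mul_comm]
  · simp [hu0 ψ hψ]

theorem dense_span_range [DiscreteTopology (characterSpace ℂ B)]
    (htaub : Dense {a : B | HasCompactSupport fun φ : characterSpace ℂ B => φ a})
    {u : characterSpace ℂ B → B} (hu1 : ∀ φ : characterSpace ℂ B, φ (u φ) = 1)
    (hu0 : ∀ φ ψ : characterSpace ℂ B, ψ ≠ φ → ψ (u φ) = 0) :
    Dense (Submodule.span ℂ (Set.range u) : Set B) := by
  refine htaub.mono fun a ha => ?_
  have hfin : (Function.support fun ψ : characterSpace ℂ B => ψ a).Finite :=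
    ha.finite_of_discrete.subset (subset_tsupport _)
  have hsum : a = ∑ φ ∈ hfin.toFinset, φ a • u φ := by
    refine (sub_eq_zero.mp (hss _ fun ψ => ?_))
    rw [map_sub, map_sum, Finset.sum_eq_single ψ (fun φ _ hφ => by simp [hu0 φ ψ hφ.symm])]
    · simp [hu1]
    · intro hψ
      simp_all
  rw [hsum]
  exact Submodule.sum_mem _ fun φ _ => Submodule.smul_mem _ _ (Submodule.subset_span ⟨φ, rfl⟩)

end Semisimple

end WeakDual.CharacterSpace

theorem NormedSpace.isClosed_range_inclusionInDoubleDual (X : Type) [NormedAddCommGroup X]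
    [NormedSpace ℂ X] [CompleteSpace X] : IsClosed (Set.range (inclusionInDoubleDual ℂ X)) :=
  (inclusionInDoubleDualLi ℂ (E := X)).isometry.isUniformInducing.isComplete_range.isClosed

theorem ContinuousLinearMap.forall_apply_mem_of_dense_span {R G H : Type} [Semiring R]
    [TopologicalSpace G] [AddCommMonoid G] [Module R G] [TopologicalSpace H] [AddCommMonoid H]
    [Module R H] (T : G →L[R] H) {S : Submodule R H} (hS : IsClosed (S : Set H)) {s : Set G}
    (hs : Dense (Submodule.span R s : Set G)) (h : ∀ x ∈ s, T x ∈ S) (x : G) : T x ∈ S :=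
  closure_minimal (Submodule.span_le.mpr h : Submodule.span R s ≤ S.comap (T : G →ₗ[R] H))
    (hS.preimage T.continuous) (hs x)

theorem Ultrafilter.exists_forall_tendsto_apply_of_norm_le {X ι : Type} [NormedAddCommGroup X]
    [NormedSpace ℂ X] (U : Ultrafilter ι) (x : ι → X) {C : ℝ} (hx : ∀ i, ‖x i‖ ≤ C) :
    ∃ N : StrongDual ℂ (StrongDual ℂ X), ∀ ξ, Tendsto (fun i => ξ (x i)) U (𝓝 (N ξ)) := by
  let y : ι → WeakDual ℂ (StrongDual ℂ X) := fun i =>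
    StrongDual.toWeakDual (inclusionInDoubleDual ℂ X (x i))
  obtain ⟨N, -, hN⟩ := (WeakDual.isCompact_closedBall 0 C).ultrafilter_le_nhds (U.map y) (by
    rw [Ultrafilter.coe_map, le_principal_iff]
    refine mem_map.mpr (Eventually.of_forall fun i => ?_)
    simpa [y] using (double_dual_bound ℂ X (x i)).trans (hx i))
  exact ⟨WeakDual.toStrongDual N, fun ξ => ((WeakDual.eval_continuous ξ).tendsto N).comp hN⟩

theorem Filter.Tendsto.mul_mul_self_of_norm_le {R ι : Type} [NonUnitalNormedRing R] {F : Filter ι}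
    {e : ι → R} {C : ℝ} (hC : ∀ i, ‖e i‖ ≤ C) {a : R} (h : Tendsto (fun i => a * e i) F (𝓝 a)) :
    Tendsto (fun i => a * (e i * e i)) F (𝓝 a) := by
  have h0 : Tendsto (fun i => (a * e i - a) * e i) F (𝓝 0) :=
    (tendsto_sub_nhds_zero_iff.mpr h).zero_mul_isBoundedUnder_le
      ⟨C, eventually_map.mpr (Eventually.of_forall hC)⟩
  convert h0.add h using 2 with i
  · noncomm_ring
  · rw [zero_add]

namespace Submodule

variable {G V W : Type} [NormedAddCommGroup G] [NormedSpace ℂ G]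
  [NormedAddCommGroup V] [NormedSpace ℂ V] [NormedAddCommGroup W] [NormedSpace ℂ W]

noncomputable def liftQL₂ (K : Submodule ℂ V) [IsClosed (K : Set V)] (Φ : G →L[ℂ] V →L[ℂ] W)
    (h : ∀ a, ∀ x ∈ K, Φ a x = 0) : G →L[ℂ] V ⧸ K →L[ℂ] W :=
  (K.liftQL Φ.flip fun x hx => ContinuousLinearMap.ext fun a => h a x hx).flip

@[simp]
theorem liftQL₂_mk (K : Submodule ℂ V) [IsClosed (K : Set V)] (Φ : G →L[ℂ] V →L[ℂ] W)
    (h : ∀ a, ∀ x ∈ K, Φ a x = 0) (a : G) (x : V) :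
    K.liftQL₂ Φ h a (Submodule.Quotient.mk x) = Φ a x :=
  rfl

end Submodule

namespace IsProjTensor

variable {V W X : Type} [NormedAddCommGroup V] [NormedSpace ℂ V]
  [NormedAddCommGroup W] [NormedSpace ℂ W] [NormedAddCommGroup X] [NormedSpace ℂ X]

theorem ext {t : V →L[ℂ] W →L[ℂ] X} (ht : IsProjTensor V W X t) {Y : Type}
    [NormedAddCommGroup Y] [NormedSpace ℂ Y] {f g : X →L[ℂ] Y}
    (h : ∀ x y, f (t x y) = g (t x y)) : f = g :=
  ContinuousLinearMap.ext_on ht.span_dense (by rintro _ ⟨x, y, rfl⟩; exact h x y)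

def bimod {t : A →L[ℂ] A →L[ℂ] X} (ht : IsProjTensor A A X t) {l r : A →L[ℂ] X →L[ℂ] X}
    (hlt : ∀ a x y, l a (t x y) = t (a * x) y) (hrt : ∀ a x y, r a (t x y) = t x (y * a)) :
    BBimod A X where
  l := l
  r := r
  l_mul a b := DFunLike.congr_fun <| ht.ext (g := (l a).comp (l b)) fun x y => by
    simp [hlt, mul_assoc]
  r_mul a b := DFunLike.congr_fun <| ht.ext (g := (r b).comp (r a)) fun x y => by
    simp [hrt, mul_assoc]
  lr a b := DFunLike.congr_fun <| ht.ext (f := (l a).comp (r b)) (g := (r b).comp (l a))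
    fun x y => by simp [hlt, hrt]

section

variable [IsScalarTower ℂ A A] [SMulCommClass ℂ A A] {X : Type} [NormedAddCommGroup X]
  [NormedSpace ℂ X] {t : A →L[ℂ] A →L[ℂ] X}
  (ht : IsProjTensor A A X t) {Δ : X →L[ℂ] A} (hΔ : ∀ a b, Δ (t a b) = a * b)
include ht hΔ

theorem map_mul_left {l : A →L[ℂ] X →L[ℂ] X} (hlt : ∀ a x y, l a (t x y) = t (a * x) y)
    (a : A) (x : X) : Δ (l a x) = a * Δ x :=
  DFunLike.congr_fun (ht.ext (f := Δ.comp (l a)) (g := (ContinuousLinearMap.mul ℂ A a).comp Δ)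
    fun x y => by simp [hlt, hΔ, mul_assoc]) x

theorem map_mul_right {r : A →L[ℂ] X →L[ℂ] X} (hrt : ∀ a x y, r a (t x y) = t x (y * a))
    (a : A) (x : X) : Δ (r a x) = Δ x * a :=
  DFunLike.congr_fun (ht.ext (f := Δ.comp (r a))
    (g := ((ContinuousLinearMap.mul ℂ A).flip a).comp Δ)
    fun x y => by simp [hrt, hΔ, mul_assoc]) x

end

end IsProjTensor

namespace BBimod

variable (M : BBimod A E)

noncomputable def dual : BBimod A (StrongDual ℂ E) where
  l := (ContinuousLinearMap.compL ℂ E E ℂ).flip.comp M.r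
  r := (ContinuousLinearMap.compL ℂ E E ℂ).flip.comp M.l
  l_mul a b φ := by ext x; simp [M.r_mul]
  r_mul a b φ := by ext x; simp [M.l_mul]
  lr a b φ := by ext x; simp [M.lr]

@[simp] theorem dual_l_apply (a : A) (φ : StrongDual ℂ E) (x : E) : M.dual.l a φ x = φ (M.r a x) :=
  rfl

@[simp] theorem dual_r_apply (a : A) (φ : StrongDual ℂ E) (x : E) : M.dual.r a φ x = φ (M.l a x) :=
  rfl

noncomputable def innerDerivation (φ : StrongDual ℂ E) : A →L[ℂ] StrongDual ℂ E :=
  M.dual.l.flip φ - M.dual.r.flip φ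

@[simp] theorem innerDerivation_apply (φ : StrongDual ℂ E) (a : A) (x : E) :
    M.innerDerivation φ a x = φ (M.r a x) - φ (M.l a x) :=
  rfl

theorem isDualDerivation_innerDerivation (φ : StrongDual ℂ E) :
    M.IsDualDerivation (M.innerDerivation φ) := by
  intro a b x
  simp only [innerDerivation_apply, M.l_mul, M.r_mul, M.lr]
  ring

section

variable {X : Type} [NormedAddCommGroup X] [NormedSpace ℂ X] (M : BBimod A X)

theorem dual_dual_l_inclusionInDoubleDual (a : A) (x : X) :
    M.dual.dual.l a (inclusionInDoubleDual ℂ X x) = inclusionInDoubleDual ℂ X (M.l a x) :=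
  rfl

theorem dual_dual_r_inclusionInDoubleDual (a : A) (x : X) :
    M.dual.dual.r a (inclusionInDoubleDual ℂ X x) = inclusionInDoubleDual ℂ X (M.r a x) :=
  rfl

end

variable (K : Submodule ℂ E) [IsClosed (K : Set E)]
  (hl : ∀ a, ∀ x ∈ K, M.l a x ∈ K) (hr : ∀ a, ∀ x ∈ K, M.r a x ∈ K)

noncomputable def quotient : BBimod A (E ⧸ K) where
  l := K.liftQL₂ ((ContinuousLinearMap.compL ℂ E E (E ⧸ K) K.mkQL).comp M.l)
    fun a x hx => by simpa using hl a x hx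
  r := K.liftQL₂ ((ContinuousLinearMap.compL ℂ E E (E ⧸ K) K.mkQL).comp M.r)
    fun a x hx => by simpa using hr a x hx
  l_mul a b y := by
    obtain ⟨x, rfl⟩ := Submodule.Quotient.mk_surjective K y
    simp [M.l_mul]
  r_mul a b y := by
    obtain ⟨x, rfl⟩ := Submodule.Quotient.mk_surjective K y
    simp [M.r_mul]
  lr a b y := by
    obtain ⟨x, rfl⟩ := Submodule.Quotient.mk_surjective K y
    simp [M.lr]

@[simp] theorem quotient_l_mk (a : A) (x : E) :
    (M.quotient K hl hr).l a (Submodule.Quotient.mk x) = Submodule.Quotient.mk (M.l a x) :=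
  rfl

@[simp] theorem quotient_r_mk (a : A) (x : E) :
    (M.quotient K hl hr).r a (Submodule.Quotient.mk x) = Submodule.Quotient.mk (M.r a x) :=
  rfl

end BBimod

theorem Amenable.exists_eq_innerDerivation_of_vanishing (ham : Amenable A) [CompleteSpace E]
    (M : BBimod A E) (K : Submodule ℂ E) [IsClosed (K : Set E)]
    (hl : ∀ a, ∀ x ∈ K, M.l a x ∈ K) (hr : ∀ a, ∀ x ∈ K, M.r a x ∈ K)
    {D : A →L[ℂ] StrongDual ℂ E} (hD : M.IsDualDerivation D) (hDK : ∀ a, ∀ x ∈ K, D a x = 0) :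
    ∃ φ : StrongDual ℂ E, (∀ x ∈ K, φ x = 0) ∧ D = M.innerDerivation φ := by
  have hD₀ : (M.quotient K hl hr).IsDualDerivation (K.liftQL₂ D hDK) := by
    intro a b y
    obtain ⟨x, rfl⟩ := Submodule.Quotient.mk_surjective K y
    simpa using hD a b x
  obtain ⟨φ₀, hφ₀⟩ := ham _ _ _ hD₀
  refine ⟨φ₀.comp K.mkQL, fun x hx => by simp [(Submodule.Quotient.mk_eq_zero K).mpr hx], ?_⟩
  ext a x
  simpa using hφ₀ a (Submodule.Quotient.mk x)

section VirtualDiagonal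

variable [IsScalarTower ℂ A A] [SMulCommClass ℂ A A] {X : Type} [NormedAddCommGroup X]
  [NormedSpace ℂ X]

/-- `m ∈ (A ⊗̂ A)**` is a virtual diagonal: `a·m = m·a` and `Δ**(m)·a = a`, the latter tested
against all `f ∈ A⋆`. -/
structure BBimod.IsVirtualDiagonal (M : BBimod A X) (Δ : X →L[ℂ] A)
    (m : StrongDual ℂ (StrongDual ℂ X)) : Prop where
  comm : ∀ a, M.dual.dual.l a m = M.dual.dual.r a m
  diag : ∀ a (f : StrongDual ℂ A), m ((f.comp (ContinuousLinearMap.mul ℂ A a)).comp Δ) = f a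

theorem BAI.exists_bidual_diag (hbai : BAI A) {t : A →L[ℂ] A →L[ℂ] X} (ht : IsProjTensor A A X t)
    {Δ : X →L[ℂ] A} (hΔ : ∀ a b, Δ (t a b) = a * b) :
    ∃ N : StrongDual ℂ (StrongDual ℂ X),
      ∀ a (f : StrongDual ℂ A), N ((f.comp (ContinuousLinearMap.mul ℂ A a)).comp Δ) = f a := by
  obtain ⟨ι, F, e, hF, ⟨C, hC⟩, hlim⟩ := hbai
  obtain ⟨U, hU⟩ := exists_ultrafilter_le F
  obtain ⟨N, hN⟩ := U.exists_forall_tendsto_apply_of_norm_le (fun i => t (e i) (e i)) (C := C * C)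
    fun i => (ht.norm_le _ _).trans
      (mul_le_mul (hC i) (hC i) (norm_nonneg _) ((norm_nonneg _).trans (hC i)))
  refine ⟨N, fun a f => tendsto_nhds_unique (hN _) ?_⟩
  simp only [ContinuousLinearMap.comp_apply, hΔ, ContinuousLinearMap.mul_apply']
  exact ((f.continuous.tendsto a).comp ((hlim a).2.mul_mul_self_of_norm_le hC)).mono_left hU

variable {M : BBimod A X} {Δ : X →L[ℂ] A} {m : StrongDual ℂ (StrongDual ℂ X)}

theorem BBimod.IsVirtualDiagonal.exists_rightInverse (hm : M.IsVirtualDiagonal Δ m)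
    (hΔ : ∀ a x, Δ (M.l a x) = a * Δ x)
    (hrange : ∀ a, M.dual.dual.l a m ∈ Set.range (inclusionInDoubleDual ℂ X)) :
    ∃ ρ : A →L[ℂ] X, (∀ a, Δ (ρ a) = a) ∧
      (∀ a b, ρ (a * b) = M.l a (ρ b)) ∧ (∀ a b, ρ (a * b) = M.r b (ρ a)) := by
  let ι := inclusionInDoubleDualLi ℂ (E := X)
  let R := M.dual.dual.l.flip m
  let ρ₀ : A →ₗ[ℂ] X := (LinearEquiv.ofInjective _ ι.injective).symm.toLinearMap ∘ₗ
    (R : A →ₗ[ℂ] StrongDual ℂ (StrongDual ℂ X)).codRestrict _ hrange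
  have hρ₀ : ∀ a, ι (ρ₀ a) = R a := fun a =>
    LinearEquiv.ofInjective_symm_apply (h := ι.injective) _ _
  let ρ := ρ₀.mkContinuous ‖R‖ fun a => by rw [← ι.norm_map, hρ₀]; exact R.le_opNorm a
  have hρ : ∀ a, inclusionInDoubleDual ℂ X (ρ a) = M.dual.dual.l a m := hρ₀
  have hι : Function.Injective (inclusionInDoubleDual ℂ X) := ι.injective
  refine ⟨ρ, fun a => ?_, fun a b => hι ?_, fun a b => hι ?_⟩
  · refine (SeparatingDual.eq_iff_forall_dual_eq (R := ℂ)).mpr fun f => ?_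
    calc f (Δ (ρ a)) = M.dual.dual.l a m (f.comp Δ) := congr($(hρ a) (f.comp Δ))
      _ = m ((f.comp (ContinuousLinearMap.mul ℂ A a)).comp Δ) := congrArg m (by ext x; simp [hΔ])
      _ = f a := hm.diag a f
  · rw [hρ, ← BBimod.dual_dual_l_inclusionInDoubleDual, hρ]
    exact M.dual.dual.l_mul a b m
  · rw [hρ, ← BBimod.dual_dual_r_inclusionInDoubleDual, hρ, hm.comm, hm.comm]
    exact M.dual.dual.r_mul a b m

end VirtualDiagonal

theorem Amenable.exists_isVirtualDiagonal {B X : Type} [NonUnitalNormedCommRing B]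
    [NormedSpace ℂ B] [IsScalarTower ℂ B B] [SMulCommClass ℂ B B] [NormedAddCommGroup X]
    [NormedSpace ℂ X] (hbai : BAI B) (ham : Amenable B) {t : B →L[ℂ] B →L[ℂ] X}
    (ht : IsProjTensor B B X t) (M : BBimod B X) (hlt : ∀ a x y, M.l a (t x y) = t (a * x) y)
    (hrt : ∀ a x y, M.r a (t x y) = t x (y * a)) {Δ : X →L[ℂ] B} (hΔ : ∀ a b, Δ (t a b) = a * b) :
    ∃ m, M.IsVirtualDiagonal Δ m := by
  obtain ⟨N, hN⟩ := hbai.exists_bidual_diag ht hΔ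
  let Δt : StrongDual ℂ B →L[ℂ] StrongDual ℂ X := (ContinuousLinearMap.compL ℂ X B ℂ).flip Δ
  -- by commutativity both actions on `Δ⋆ f` agree, so inner derivations vanish on `range Δ⋆`
  have hdl : ∀ a f, M.dual.l a (Δt f) = Δt (f.comp (ContinuousLinearMap.mul ℂ B a)) :=
    fun a f => by ext x; exact congrArg f ((ht.map_mul_right hΔ hrt a x).trans (mul_comm _ _))
  have hdr : ∀ a f, M.dual.r a (Δt f) = Δt (f.comp (ContinuousLinearMap.mul ℂ B a)) :=
    fun a f => by ext x; exact congrArg f (ht.map_mul_left hΔ hlt a x)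
  let S := LinearMap.range (Δt : StrongDual ℂ B →ₗ[ℂ] StrongDual ℂ X)
  let K := S.topologicalClosure
  have : IsClosed (K : Set (StrongDual ℂ X)) := Submodule.isClosed_topologicalClosure _
  have hKstable : ∀ T : StrongDual ℂ X →L[ℂ] StrongDual ℂ X, (∀ f, T (Δt f) ∈ S) →
      ∀ ξ ∈ K, T ξ ∈ K := fun T hT =>
    Set.MapsTo.closure (by rintro _ ⟨f, rfl⟩; exact hT f) T.continuous
  have hDK : ∀ a, ∀ ξ ∈ K, M.dual.innerDerivation N a ξ = 0 := fun a _ hξ =>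
    S.topologicalClosure_minimal
      (t := LinearMap.ker (M.dual.innerDerivation N a : StrongDual ℂ X →ₗ[ℂ] ℂ))
      (by rintro _ ⟨f, rfl⟩; simp [hdl, hdr]) (ContinuousLinearMap.isClosed_ker _) hξ
  obtain ⟨φ, hφK, hφ⟩ := ham.exists_eq_innerDerivation_of_vanishing M.dual K
    (fun a => hKstable _ fun f => hdl a f ▸ ⟨_, rfl⟩)
    (fun a => hKstable _ fun f => hdr a f ▸ ⟨_, rfl⟩)
    (M.dual.isDualDerivation_innerDerivation N) hDK
  refine ⟨N - φ, fun a => ?_, fun a f => ?_⟩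
  · ext ξ
    have := congr($hφ a ξ)
    simp only [BBimod.innerDerivation_apply] at this
    simp only [BBimod.dual_l_apply, BBimod.dual_r_apply, sub_apply]
    linear_combination this
  · have : φ ((f.comp (ContinuousLinearMap.mul ℂ B a)).comp Δ) = 0 :=
      hφK _ (Submodule.le_topologicalClosure _ ⟨_, rfl⟩)
    rw [sub_apply, hN, this, sub_zero]

theorem BBimod.IsVirtualDiagonal.dual_dual_l_eq_of_mul_eq_smul {B X : Type}
    [NonUnitalNormedCommRing B] [NormedSpace ℂ B] [IsScalarTower ℂ B B] [SMulCommClass ℂ B B]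
    [NormedAddCommGroup X] [NormedSpace ℂ X] {t : B →L[ℂ] B →L[ℂ] X} (ht : IsProjTensor B B X t)
    {M : BBimod B X} (hlt : ∀ a x y, M.l a (t x y) = t (a * x) y)
    (hrt : ∀ a x y, M.r a (t x y) = t x (y * a)) {Δ : X →L[ℂ] B}
    (hΔ : ∀ a b, Δ (t a b) = a * b) {m : StrongDual ℂ (StrongDual ℂ X)}
    (hm : M.IsVirtualDiagonal Δ m) {f : StrongDual ℂ B} {u : B} (hfu : f u = 1) (hu : ∀ b, u * b = f b • u) :
    M.dual.dual.l u m = inclusionInDoubleDual ℂ X (t u u) := by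
  have huu : u * u = u := by rw [hu, hfu, one_smul]
  have hξ : ∀ ξ : StrongDual ℂ X,
      M.dual.l u (M.dual.r u ξ) = ξ (t u u) • (f.comp (ContinuousLinearMap.mul ℂ B u)).comp Δ :=
    fun ξ => ht.ext fun x y => by
      have hux : u * x = f x • u := hu x
      have huy : y * u = f y • u := mul_comm y u ▸ hu y
      have huxy : u * (x * y) = (f x * f y) • u := by
        rw [← mul_assoc, hux, smul_mul_assoc, hu, smul_smul]
      simp only [ContinuousLinearMap.comp_apply, smul_apply,
        ContinuousLinearMap.mul_apply', BBimod.dual_l_apply, BBimod.dual_r_apply, hlt, hrt, hΔ,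
        hux, huy, huxy, map_smul, hfu, smul_eq_mul]
      ring
  ext ξ
  calc M.dual.dual.l u m ξ = m (M.dual.r (u * u) ξ) := by rw [huu]; rfl
    _ = M.dual.dual.l u m (M.dual.r u ξ) := congrArg m (M.dual.r_mul u u ξ)
    _ = m (M.dual.l u (M.dual.r u ξ)) := by rw [hm.comm]; rfl
    _ = ξ (t u u) := by rw [hξ, map_smul, hm.diag, hfu, smul_eq_mul, mul_one]

open WeakDual in
theorem statement4_general (A : Type) [NonUnitalNormedCommRing A] [NormedSpace ℂ A]
    [IsScalarTower ℂ A A] [SMulCommClass ℂ A A]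
    (hss : ∀ a : A, (∀ φ : characterSpace ℂ A, φ a = 0) → a = 0)
    (hdisc : DiscreteTopology (characterSpace ℂ A))
    (htaub : Dense {a : A | HasCompactSupport fun φ : characterSpace ℂ A => φ a})
    (hbai : BAI A) (ham : Amenable A)
    (X : Type) [NormedAddCommGroup X] [NormedSpace ℂ X] [CompleteSpace X]
    (t : A →L[ℂ] A →L[ℂ] X) (ht : IsProjTensor A A X t)
    (l r : A →L[ℂ] X →L[ℂ] X)
    (hlt : ∀ a x y, l a (t x y) = t (a * x) y)
    (hrt : ∀ a x y, r a (t x y) = t x (y * a))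
    (Δ : X →L[ℂ] A) (hΔ : ∀ a b, Δ (t a b) = a * b) :
    -- biprojectivity: `Δ` has a bounded right inverse which is an `A`-bimodule homomorphism
    ∃ ρ : A →L[ℂ] X, (∀ a, Δ (ρ a) = a) ∧
      (∀ a b, ρ (a * b) = l a (ρ b)) ∧ (∀ a b, ρ (a * b) = r b (ρ a)) := by
  let M := ht.bimod hlt hrt
  obtain ⟨m, hm⟩ := ham.exists_isVirtualDiagonal hbai ht M hlt hrt hΔ
  choose u hu1 hu0 using CharacterSpace.exists_apply_eq_one_forall_ne_apply_eq_zero htaub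
  have hmu : ∀ φ, M.dual.dual.l (u φ) m = inclusionInDoubleDual ℂ X (t (u φ) (u φ)) := fun φ =>
    hm.dual_dual_l_eq_of_mul_eq_smul ht hlt hrt hΔ (f := CharacterSpace.toCLM φ) (hu1 φ)
      (CharacterSpace.mul_eq_smul_of_apply_eq_one hss (hu1 φ) (hu0 φ))
  let ι := (inclusionInDoubleDualLi ℂ (E := X)).toLinearMap
  refine hm.exists_rightInverse (ht.map_mul_left hΔ hlt) fun a =>
    (M.dual.dual.l.flip m).forall_apply_mem_of_dense_span (S := LinearMap.range ι)
      (isClosed_range_inclusionInDoubleDual X)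
      (CharacterSpace.dense_span_range hss htaub hu1 hu0) ?_ a
  rintro _ ⟨φ, rfl⟩
  exact ⟨_, (hmu φ).symm⟩

open WeakDual in
/-- A commutative, semisimple, Tauberian Banach algebra with discrete character
space and a bounded approximate identity is biprojective whenever it is amenable.  Here
`(X, t)` realizes `A ⊗̂ A` with its canonical `A`-bimodule actions `l`, `r` and
multiplication map `Δ`. -/
theorem statement4 (A : Type) [NonUnitalNormedCommRing A] [NormedSpace ℂ A]
    [IsScalarTower ℂ A A] [SMulCommClass ℂ A A] [CompleteSpace A]
    (hss : ∀ a : A, (∀ φ : characterSpace ℂ A, φ a = 0) → a = 0)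
    (hdisc : DiscreteTopology (characterSpace ℂ A))
    (htaub : Dense {a : A | HasCompactSupport fun φ : characterSpace ℂ A => φ a})
    (hbai : BAI A) (ham : Amenable A)
    (X : Type) [NormedAddCommGroup X] [NormedSpace ℂ X] [CompleteSpace X]
    (t : A →L[ℂ] A →L[ℂ] X) (ht : IsProjTensor A A X t)
    (l r : A →L[ℂ] X →L[ℂ] X)
    (hlt : ∀ a x y, l a (t x y) = t (a * x) y)
    (hrt : ∀ a x y, r a (t x y) = t x (y * a))
    (Δ : X →L[ℂ] A) (hΔ : ∀ a b, Δ (t a b) = a * b) :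
    -- biprojectivity: `Δ` has a bounded right inverse which is an `A`-bimodule homomorphism
    ∃ ρ : A →L[ℂ] X, (∀ a, Δ (ρ a) = a) ∧
      (∀ a b, ρ (a * b) = l a (ρ b)) ∧ (∀ a b, ρ (a * b) = r b (ρ a)) :=
  statement4_general A hss hdisc htaub hbai ham X t ht l r hlt hrt Δ hΔ
end

section
/- Every biprojective Banach algebra with a bounded approximate identity is amenable. -/
open Filter Topology NormedSpace

variable {A : Type} [NonUnitalNormedRing A] [NormedSpace ℂ A]
variable {E : Type} [NormedAddCommGroup E] [NormedSpace ℂ E]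

/-!
With `Ψ : A ⊗̂ A → E*` the lift of `u ⊗ v ↦ u · D v` and `(eᵢ)` the bounded approximate identity,
the functionals `φᵢ = Ψ(ρ(2eᵢ - eᵢ²)) - D eᵢ + eᵢ · D eᵢ` form a bounded net, and
`a · φᵢ - φᵢ · a - D a` is an explicit sum of terms carrying a factor `a eᵢ - a`, `eᵢ a - a` or
`a fᵢ - fᵢ a` with `fᵢ = 2eᵢ - eᵢ²`, hence tends to `0`. By Banach–Alaoglu the net has a weak-*
limit point `φ` along an ultrafilter, and `D a = a · φ - φ · a`.
-/

theorem StrongDual.exists_tendsto_apply_of_eventually_norm_le {𝕜 V ι : Type*}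
    [NontriviallyNormedField 𝕜] [ProperSpace 𝕜] [NormedAddCommGroup V] [NormedSpace 𝕜 V]
    (U : Ultrafilter ι) (φ : ι → StrongDual 𝕜 V) {K : ℝ} (hφ : ∀ᶠ i in U, ‖φ i‖ ≤ K) :
    ∃ ψ : StrongDual 𝕜 V, ∀ x, Tendsto (fun i => φ i x) U (𝓝 (ψ x)) := by
  have hball : ↑(U.map (StrongDual.toWeakDual ∘ φ)) ≤
      𝓟 (WeakDual.toStrongDual ⁻¹' Metric.closedBall (0 : StrongDual 𝕜 V) K) := by
    refine le_principal_iff.mpr (mem_map.mpr (hφ.mono fun i hi => ?_))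
    simpa using hi
  obtain ⟨ψ, -, hψ⟩ := (WeakDual.isCompact_closedBall 0 K).ultrafilter_le_nhds _ hball
  exact ⟨WeakDual.toStrongDual ψ, fun x => ((WeakDual.eval_continuous x).tendsto ψ).comp hψ⟩

theorem ContinuousLinearMap.tendsto_apply₂_zero {𝕜 V W G ι : Type*} [NontriviallyNormedField 𝕜]
    [NormedAddCommGroup V] [NormedSpace 𝕜 V] [NormedAddCommGroup W] [NormedSpace 𝕜 W]
    [NormedAddCommGroup G] [NormedSpace 𝕜 G] (B : V →L[𝕜] W →L[𝕜] G) {l : Filter ι}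
    {u : ι → V} {v : ι → W} {C : ℝ} (hu : ∀ i, ‖u i‖ ≤ C) (hv : Tendsto v l (𝓝 0)) :
    Tendsto (fun i => B (u i) (v i)) l (𝓝 0) := by
  refine squeeze_zero_norm (fun i => (B.le_opNorm₂ _ _).trans ?_)
    (by simpa using (tendsto_norm_zero.comp hv).const_mul (‖B‖ * C))
  exact mul_le_mul_of_nonneg_right (mul_le_mul_of_nonneg_left (hu i) (norm_nonneg B))
    (norm_nonneg _)

theorem BBimod.isInner_of_tendsto (M : BBimod A E) {D : A →L[ℂ] StrongDual ℂ E} {ι : Type}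
    {F : Filter ι} [F.NeBot] (φ : ι → StrongDual ℂ E) {K : ℝ} (hφ : ∀ i, ‖φ i‖ ≤ K)
    (hD : ∀ a x, Tendsto (fun i => φ i (M.r a x) - φ i (M.l a x)) F (𝓝 (D a x))) :
    M.IsInner D := by
  obtain ⟨U, hU⟩ := Ultrafilter.exists_le F
  obtain ⟨ψ, hψ⟩ := StrongDual.exists_tendsto_apply_of_eventually_norm_le U φ
    (Eventually.of_forall hφ)
  exact ⟨ψ, fun a x => tendsto_nhds_unique ((hD a x).mono_left hU) ((hψ _).sub (hψ _))⟩

section ApproximateUnit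

variable {R ι : Type*} [NonUnitalNormedRing R] {l : Filter ι} {e : ι → R} {C : ℝ}

theorem tendsto_add_sub_mul_self_mul (hC : ∀ i, ‖e i‖ ≤ C) {a : R}
    (he : Tendsto (fun i => e i * a) l (𝓝 a)) :
    Tendsto (fun i => (e i + e i - e i * e i) * a) l (𝓝 a) := by
  have hbdd : IsBoundedUnder (· ≤ ·) l (norm ∘ e) := isBoundedUnder_of ⟨C, hC⟩
  have hsub : Tendsto (fun i => e i * a - a) l (𝓝 0) := by simpa using he.sub_const a
  have hsmall : Tendsto (fun i => e i * (e i * a - a)) l (𝓝 0) :=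
    isBoundedUnder_le_mul_tendsto_zero hbdd hsub
  have h := (he.add he).sub (hsmall.add he)
  simp only [add_sub_cancel_right, zero_add] at h
  refine h.congr fun i => ?_
  simp only [mul_sub, add_mul, sub_mul, mul_assoc]
  abel

theorem tendsto_mul_add_sub_mul_self (hC : ∀ i, ‖e i‖ ≤ C) {a : R}
    (he : Tendsto (fun i => a * e i) l (𝓝 a)) :
    Tendsto (fun i => a * (e i + e i - e i * e i)) l (𝓝 a) := by
  have hbdd : IsBoundedUnder (· ≤ ·) l (norm ∘ e) := isBoundedUnder_of ⟨C, hC⟩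
  have hsub : Tendsto (fun i => a * e i - a) l (𝓝 0) := by simpa using he.sub_const a
  have hsmall : Tendsto (fun i => (a * e i - a) * e i) l (𝓝 0) :=
    hsub.zero_mul_isBoundedUnder_le hbdd
  have h := (he.add he).sub (hsmall.add he)
  simp only [add_sub_cancel_right, zero_add] at h
  refine h.congr fun i => ?_
  simp only [mul_sub, mul_add, sub_mul, mul_assoc]
  abel

end ApproximateUnit

theorem IsProjTensor.ext_s5 {V W X Y : Type} [NormedAddCommGroup V] [NormedSpace ℂ V]
    [NormedAddCommGroup W] [NormedSpace ℂ W] [NormedAddCommGroup X] [NormedSpace ℂ X]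
    [NormedAddCommGroup Y] [NormedSpace ℂ Y] {t : V →L[ℂ] W →L[ℂ] X} (ht : IsProjTensor V W X t)
    {g₁ g₂ : X →L[ℂ] Y} (h : ∀ u v, g₁ (t u v) = g₂ (t u v)) : g₁ = g₂ :=
  ContinuousLinearMap.ext_on ht.span_dense (by rintro _ ⟨u, v, rfl⟩; exact h u v)

section TensorLift

variable {X : Type} [NormedAddCommGroup X] [NormedSpace ℂ X] {t : A →L[ℂ] A →L[ℂ] X}

theorem IsProjTensor.exists_lift_smul_derivation (ht : IsProjTensor A A X t) (M : BBimod A E)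
    (D : A →L[ℂ] StrongDual ℂ E) :
    ∃ Ψ : X →L[ℂ] StrongDual ℂ E, ∀ u v x, Ψ (t u v) x = D v (M.r u x) := by
  obtain ⟨Ψ, -, hΨ⟩ := ht.lift (StrongDual ℂ E)
    (((ContinuousLinearMap.compL ℂ E E ℂ).comp D).flip.comp M.r)
  exact ⟨Ψ, fun u v x => by rw [hΨ]; rfl⟩

theorem BBimod.IsDualDerivation.lift_commutator {M : BBimod A E} {D : A →L[ℂ] StrongDual ℂ E}
    (hD : M.IsDualDerivation D) (ht : IsProjTensor A A X t) {l r : A →L[ℂ] X →L[ℂ] X}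
    (hlt : ∀ a x y, l a (t x y) = t (a * x) y) (hrt : ∀ a x y, r a (t x y) = t x (y * a))
    {Δ : X →L[ℂ] A} (hΔ : ∀ a b, Δ (t a b) = a * b) {Ψ : X →L[ℂ] StrongDual ℂ E}
    (hΨ : ∀ u v x, Ψ (t u v) x = D v (M.r u x)) (a : A) (m : X) (x : E) :
    Ψ m (M.r a x) - Ψ m (M.l a x) = Ψ (l a m - r a m) x + D a (M.r (Δ m) x) := by
  have key :
      (ContinuousLinearMap.apply ℂ ℂ (M.r a x) - ContinuousLinearMap.apply ℂ ℂ (M.l a x)).comp Ψ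
        = (ContinuousLinearMap.apply ℂ ℂ x).comp (Ψ.comp (l a - r a))
          + ((D a).comp (M.r.flip x)).comp Δ := by
    refine ht.ext_s5 fun u v => ?_
    simp only [ContinuousLinearMap.comp_apply, sub_apply, add_apply,
      ContinuousLinearMap.apply_apply, ContinuousLinearMap.flip_apply, map_sub, hlt, hrt, hΔ, hΨ,
      hD v a, M.r_mul, M.lr]
    ring
  simpa using DFunLike.congr_fun key m

end TensorLift

/-- In the unitization this is `Ψ m + (1 - e) · D (1 - e)` for the approximate diagonal
`m = ρ(1 - (1 - e)²) + (1 - e) ⊗ (1 - e)`. -/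
noncomputable def BBimod.approxInner {X : Type} [NormedAddCommGroup X] [NormedSpace ℂ X]
    (M : BBimod A E) (D : A →L[ℂ] StrongDual ℂ E) (Ψ : X →L[ℂ] StrongDual ℂ E)
    (ρ : A →L[ℂ] X) (e : A) : StrongDual ℂ E :=
  Ψ (ρ (e + e - e * e)) - D e + (D e).comp (M.r e)

section ApproxInner

variable {X : Type} [NormedAddCommGroup X] [NormedSpace ℂ X] {t : A →L[ℂ] A →L[ℂ] X}
  {M : BBimod A E} {D : A →L[ℂ] StrongDual ℂ E} {l r : A →L[ℂ] X →L[ℂ] X} {Δ : X →L[ℂ] A}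
  {Ψ : X →L[ℂ] StrongDual ℂ E} {ρ : A →L[ℂ] X}

theorem BBimod.IsDualDerivation.approxInner_commutator (hD : M.IsDualDerivation D)
    (ht : IsProjTensor A A X t)
    (hlt : ∀ a x y, l a (t x y) = t (a * x) y) (hrt : ∀ a x y, r a (t x y) = t x (y * a))
    (hΔ : ∀ a b, Δ (t a b) = a * b) (hΨ : ∀ u v x, Ψ (t u v) x = D v (M.r u x))
    (hρΔ : ∀ a, Δ (ρ a) = a) (hρl : ∀ a b, ρ (a * b) = l a (ρ b))
    (hρr : ∀ a b, ρ (a * b) = r b (ρ a)) (e a : A) (x : E) :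
    M.approxInner D Ψ ρ e (M.r a x) - M.approxInner D Ψ ρ e (M.l a x) - D a x =
      Ψ (ρ (a * (e + e - e * e) - (e + e - e * e) * a)) x + D (e * a - a) x
        + D e (M.r (a * e - a) x) - D (e * a - a) (M.r e x) := by
  have hcomm := hD.lift_commutator ht hlt hrt hΔ hΨ a (ρ (e + e - e * e)) x
  rw [← hρl, ← hρr, ← map_sub, hρΔ] at hcomm
  have hea := hD e a x
  have hea' := hD e a (M.r e x)
  simp only [BBimod.approxInner, map_sub, map_add, sub_apply, add_apply,
    ContinuousLinearMap.comp_apply, M.r_mul, M.lr] at hcomm hea hea' ⊢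
  linear_combination hcomm - hea + hea'

theorem BBimod.norm_approxInner_le {e : A} {C : ℝ} (he : ‖e‖ ≤ C) :
    ‖M.approxInner D Ψ ρ e‖ ≤ ‖Ψ‖ * ‖ρ‖ * (C + C + C * C) + ‖D‖ * C + ‖D‖ * C * (‖M.r‖ * C) := by
  have hC : 0 ≤ C := (norm_nonneg e).trans he
  have hf : ‖e + e - e * e‖ ≤ C + C + C * C :=
    (norm_sub_le _ _).trans (add_le_add ((norm_add_le _ _).trans (add_le_add he he))
      ((norm_mul_le _ _).trans (mul_le_mul he he (norm_nonneg _) hC)))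
  calc ‖M.approxInner D Ψ ρ e‖
      ≤ ‖Ψ (ρ (e + e - e * e))‖ + ‖D e‖ + ‖(D e).comp (M.r e)‖ :=
        (norm_add_le _ _).trans (add_le_add_left (norm_sub_le _ _) _)
    _ ≤ ‖Ψ‖ * ‖ρ‖ * ‖e + e - e * e‖ + ‖D‖ * ‖e‖ + ‖D‖ * ‖e‖ * (‖M.r‖ * ‖e‖) := by
        gcongr
        · exact (Ψ.le_opNorm _).trans ((mul_le_mul_of_nonneg_left (ρ.le_opNorm _)
            (norm_nonneg _)).trans_eq (mul_assoc ..).symm)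
        · exact D.le_opNorm _
        · exact ((D e).opNorm_comp_le _).trans
            (mul_le_mul (D.le_opNorm e) (M.r.le_opNorm e) (norm_nonneg _) (by positivity))
    _ ≤ _ := by gcongr

theorem BBimod.IsDualDerivation.tendsto_approxInner_commutator (hD : M.IsDualDerivation D)
    (ht : IsProjTensor A A X t)
    (hlt : ∀ a x y, l a (t x y) = t (a * x) y) (hrt : ∀ a x y, r a (t x y) = t x (y * a))
    (hΔ : ∀ a b, Δ (t a b) = a * b) (hΨ : ∀ u v x, Ψ (t u v) x = D v (M.r u x))
    (hρΔ : ∀ a, Δ (ρ a) = a) (hρl : ∀ a b, ρ (a * b) = l a (ρ b))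
    (hρr : ∀ a b, ρ (a * b) = r b (ρ a)) {ι : Type} {F : Filter ι} {e : ι → A} {C : ℝ}
    (hC : ∀ i, ‖e i‖ ≤ C)
    (he : ∀ a, Tendsto (fun i => e i * a) F (𝓝 a) ∧ Tendsto (fun i => a * e i) F (𝓝 a))
    (a : A) (x : E) :
    Tendsto (fun i => M.approxInner D Ψ ρ (e i) (M.r a x) - M.approxInner D Ψ ρ (e i) (M.l a x))
      F (𝓝 (D a x)) := by
  have hea : Tendsto (fun i => e i * a - a) F (𝓝 0) := by simpa using (he a).1.sub_const a
  have hae : Tendsto (fun i => a * e i - a) F (𝓝 0) := by simpa using (he a).2.sub_const a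
  have hcomm : Tendsto (fun i => a * (e i + e i - e i * e i) - (e i + e i - e i * e i) * a)
      F (𝓝 0) := by
    simpa using (tendsto_mul_add_sub_mul_self hC (he a).2).sub
      (tendsto_add_sub_mul_self_mul hC (he a).1)
  let B : A →L[ℂ] A →L[ℂ] ℂ := ((ContinuousLinearMap.compL ℂ A E ℂ).flip (M.r.flip x)).comp D
  have h₁ := (((ContinuousLinearMap.apply ℂ ℂ x).comp (Ψ.comp ρ)).continuous.tendsto 0).comp hcomm
  have h₂ := (((ContinuousLinearMap.apply ℂ ℂ x).comp D).continuous.tendsto 0).comp hea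
  have h₃ : Tendsto (fun i => D (e i) (M.r (a * e i - a) x)) F (𝓝 0) :=
    B.tendsto_apply₂_zero hC hae
  have h₄ : Tendsto (fun i => D (e i * a - a) (M.r (e i) x)) F (𝓝 0) :=
    B.flip.tendsto_apply₂_zero hC hea
  have h := (((h₁.add h₂).add h₃).sub h₄).add_const (D a x)
  simp only [map_zero, zero_add, sub_zero] at h
  refine h.congr fun i => ?_
  simp only [Function.comp_apply, ContinuousLinearMap.comp_apply, ContinuousLinearMap.apply_apply]
  rw [← hD.approxInner_commutator ht hlt hrt hΔ hΨ hρΔ hρl hρr]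
  ring

end ApproxInner

theorem statement5_general (A : Type) [NonUnitalNormedRing A] [NormedSpace ℂ A]
    (X : Type) [NormedAddCommGroup X] [NormedSpace ℂ X]
    (t : A →L[ℂ] A →L[ℂ] X) (ht : IsProjTensor A A X t)
    (l r : A →L[ℂ] X →L[ℂ] X)
    (hlt : ∀ a x y, l a (t x y) = t (a * x) y)
    (hrt : ∀ a x y, r a (t x y) = t x (y * a))
    (Δ : X →L[ℂ] A) (hΔ : ∀ a b, Δ (t a b) = a * b)
    -- biprojectivity:
    (hbiproj : ∃ ρ : A →L[ℂ] X, (∀ a, Δ (ρ a) = a) ∧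
      (∀ a b, ρ (a * b) = l a (ρ b)) ∧ (∀ a b, ρ (a * b) = r b (ρ a)))
    -- bounded approximate identity:
    (hbai : BAI A) :
    Amenable A := by
  obtain ⟨ρ, hρΔ, hρl, hρr⟩ := hbiproj
  obtain ⟨ι, F, e, hF, ⟨C, hC⟩, he⟩ := hbai
  have := hF
  intro E _ _ _ M D hD
  obtain ⟨Ψ, hΨ⟩ := ht.exists_lift_smul_derivation M D
  exact M.isInner_of_tendsto (fun i => M.approxInner D Ψ ρ (e i))
    (fun i => BBimod.norm_approxInner_le (hC i))
    (hD.tendsto_approxInner_commutator ht hlt hrt hΔ hΨ hρΔ hρl hρr hC he)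

/-- Every biprojective Banach algebra with a bounded approximate identity is
amenable.  Here `(X, t)` realizes `A ⊗̂ A` with its canonical `A`-bimodule actions `l`, `r`
and multiplication map `Δ`, and biprojectivity is the existence of a bounded `A`-bimodule
right inverse `ρ` of `Δ`. -/
theorem statement5 (A : Type) [NonUnitalNormedRing A] [NormedSpace ℂ A]
    [IsScalarTower ℂ A A] [SMulCommClass ℂ A A] [CompleteSpace A]
    (X : Type) [NormedAddCommGroup X] [NormedSpace ℂ X] [CompleteSpace X]
    (t : A →L[ℂ] A →L[ℂ] X) (ht : IsProjTensor A A X t)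
    (l r : A →L[ℂ] X →L[ℂ] X)
    (hlt : ∀ a x y, l a (t x y) = t (a * x) y)
    (hrt : ∀ a x y, r a (t x y) = t x (y * a))
    (Δ : X →L[ℂ] A) (hΔ : ∀ a b, Δ (t a b) = a * b)
    -- biprojectivity:
    (hbiproj : ∃ ρ : A →L[ℂ] X, (∀ a, Δ (ρ a) = a) ∧
      (∀ a b, ρ (a * b) = l a (ρ b)) ∧ (∀ a b, ρ (a * b) = r b (ρ a)))
    -- bounded approximate identity:
    (hbai : BAI A) :
    Amenable A :=
  statement5_general A X t ht l r hlt hrt Δ hΔ hbiproj hbai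
end

section
/- Let E₁, E₂, F₁, F₂ be Banach spaces and let T_j : E_j → F_j (j = 1, 2) be bounded operators that are norm limits of finite rank operators. Then T₁ ⊗ T₂ : E₁ ⊗̂ E₂ → F₁ ⊗̂ F₂ is a norm limit of finite rank operators, and in particular compact. -/
open Filter Topology

/-- A bounded operator is of finite rank. -/
def FinRank {X Y : Type} [NormedAddCommGroup X] [NormedSpace ℂ X]
    [NormedAddCommGroup Y] [NormedSpace ℂ Y] (T : X →L[ℂ] Y) : Prop :=
  FiniteDimensional ℂ (LinearMap.range (T : X →ₗ[ℂ] Y))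

section Aux

variable {E F X Y : Type} [NormedAddCommGroup E] [NormedSpace ℂ E]
    [NormedAddCommGroup F] [NormedSpace ℂ F]
    [NormedAddCommGroup X] [NormedSpace ℂ X]
    [NormedAddCommGroup Y] [NormedSpace ℂ Y]

/-- Two bounded operators agreeing on elementary tensors agree everywhere. -/
lemma aux_ext (t : E →L[ℂ] F →L[ℂ] X)
    (hd : Dense ((Submodule.span ℂ {z : X | ∃ e f, t e f = z} : Submodule ℂ X) : Set X))
    (T T' : X →L[ℂ] Y) (h : ∀ e f, T (t e f) = T' (t e f)) : T = T' := by
  have hspan : ∀ x ∈ Submodule.span ℂ {z : X | ∃ e f, t e f = z}, T x = T' x := by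
    intro x hx
    induction hx using Submodule.span_induction with
    | mem z hz => obtain ⟨e, f, rfl⟩ := hz; exact h e f
    | zero => simp
    | add a b _ _ ha hb => simp [ha, hb]
    | smul c a _ ha => simp [ha]
  have := Continuous.ext_on hd T.continuous T'.continuous hspan
  exact ContinuousLinearMap.ext fun x => congrFun this x

/-- An operator landing (on elementary tensors) in a finite-dimensional subspace has
finite rank, given the dense-span property. -/
lemma aux_finRank (t : E →L[ℂ] F →L[ℂ] X)
    (hd : Dense ((Submodule.span ℂ {z : X | ∃ e f, t e f = z} : Submodule ℂ X) : Set X))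
    (T : X →L[ℂ] Y) (W : Submodule ℂ Y) [FiniteDimensional ℂ W]
    (h : ∀ e f, T (t e f) ∈ W) :
    FiniteDimensional ℂ (LinearMap.range (T : X →ₗ[ℂ] Y)) := by
  have hall : ∀ x, T x ∈ W := by
    set P : Submodule ℂ X := W.comap (T : X →ₗ[ℂ] Y) with hP
    have hclosed : IsClosed (P : Set X) :=
      W.closed_of_finiteDimensional.preimage T.continuous
    have hsub : Submodule.span ℂ {z : X | ∃ e f, t e f = z} ≤ P := by
      rw [Submodule.span_le]
      rintro z ⟨e, f, rfl⟩
      exact h e f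
    intro x
    have hx : x ∈ closure ((Submodule.span ℂ {z : X | ∃ e f, t e f = z} : Submodule ℂ X) : Set X) := by
      rw [hd.closure_eq]; trivial
    exact hclosed.closure_subset (closure_mono hsub hx)
  have hle : LinearMap.range (T : X →ₗ[ℂ] Y) ≤ W := by
    rintro _ ⟨x, rfl⟩
    exact hall x
  exact Submodule.finiteDimensional_of_le hle

/-- A finite-rank bounded operator is compact. -/
lemma aux_compact (T : X →L[ℂ] Y)
    (h : FiniteDimensional ℂ (LinearMap.range (T : X →ₗ[ℂ] Y))) : IsCompactOperator T := by
  set W := LinearMap.range (T : X →ₗ[ℂ] Y)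
  haveI := h
  refine (isCompactOperator_iff_image_closedBall_subset_compact (T : X →ₗ[ℂ] Y)
    zero_lt_one).mpr ?_
  refine ⟨Subtype.val '' Metric.closedBall (0 : W) ‖T‖, ?_, ?_⟩
  · exact (isCompact_closedBall _ _).image continuous_subtype_val
  · rintro _ ⟨x, hx, rfl⟩
    refine ⟨⟨T x, LinearMap.mem_range_self _ x⟩, ?_, rfl⟩
    simp only [Metric.mem_closedBall, dist_zero_right]
    calc ‖(⟨T x, _⟩ : W)‖ = ‖T x‖ := rfl
      _ ≤ ‖T‖ * ‖x‖ := T.le_opNorm x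
      _ ≤ ‖T‖ * 1 := by gcongr; simpa [dist_zero_right] using hx
      _ = ‖T‖ := mul_one _

end Aux

/-- The bilinear map `(e, f) ↦ u (A₁ e) (A₂ f)`. -/
noncomputable def auxBil {E₁ E₂ F₁ F₂ Y : Type}
    [NormedAddCommGroup E₁] [NormedSpace ℂ E₁] [NormedAddCommGroup E₂] [NormedSpace ℂ E₂]
    [NormedAddCommGroup F₁] [NormedSpace ℂ F₁] [NormedAddCommGroup F₂] [NormedSpace ℂ F₂]
    [NormedAddCommGroup Y] [NormedSpace ℂ Y]
    (u : F₁ →L[ℂ] F₂ →L[ℂ] Y) (A₁ : E₁ →L[ℂ] F₁) (A₂ : E₂ →L[ℂ] F₂) :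
    E₁ →L[ℂ] E₂ →L[ℂ] Y :=
  (((u.comp A₁).flip).comp A₂).flip

@[simp] lemma auxBil_apply {E₁ E₂ F₁ F₂ Y : Type}
    [NormedAddCommGroup E₁] [NormedSpace ℂ E₁] [NormedAddCommGroup E₂] [NormedSpace ℂ E₂]
    [NormedAddCommGroup F₁] [NormedSpace ℂ F₁] [NormedAddCommGroup F₂] [NormedSpace ℂ F₂]
    [NormedAddCommGroup Y] [NormedSpace ℂ Y]
    (u : F₁ →L[ℂ] F₂ →L[ℂ] Y) (A₁ : E₁ →L[ℂ] F₁) (A₂ : E₂ →L[ℂ] F₂) (e : E₁) (f : E₂) :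
    auxBil u A₁ A₂ e f = u (A₁ e) (A₂ f) := rfl

/-- If `T₁ : E₁ → F₁` and `T₂ : E₂ → F₂` are norm limits of finite rank
operators between Banach spaces, then `T₁ ⊗ T₂ : E₁ ⊗̂ E₂ → F₁ ⊗̂ F₂` is a norm limit of finite
rank operators, and in particular compact. -/
theorem statement6 (E₁ E₂ F₁ F₂ : Type)
    [NormedAddCommGroup E₁] [NormedSpace ℂ E₁] [CompleteSpace E₁]
    [NormedAddCommGroup E₂] [NormedSpace ℂ E₂] [CompleteSpace E₂]
    [NormedAddCommGroup F₁] [NormedSpace ℂ F₁] [CompleteSpace F₁]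
    [NormedAddCommGroup F₂] [NormedSpace ℂ F₂] [CompleteSpace F₂]
    (X Y : Type) [NormedAddCommGroup X] [NormedSpace ℂ X] [CompleteSpace X]
    [NormedAddCommGroup Y] [NormedSpace ℂ Y] [CompleteSpace Y]
    (t : E₁ →L[ℂ] E₂ →L[ℂ] X) (ht : IsProjTensor E₁ E₂ X t)
    (u : F₁ →L[ℂ] F₂ →L[ℂ] Y) (hu : IsProjTensor F₁ F₂ Y u)
    (T₁ : E₁ →L[ℂ] F₁) (hT₁ : T₁ ∈ closure {T : E₁ →L[ℂ] F₁ | FinRank T})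
    (T₂ : E₂ →L[ℂ] F₂) (hT₂ : T₂ ∈ closure {T : E₂ →L[ℂ] F₂ | FinRank T})
    -- `S = T₁ ⊗ T₂`:
    (S : X →L[ℂ] Y) (hS : ∀ e f, S (t e f) = u (T₁ e) (T₂ f)) :
    S ∈ closure {T : X →L[ℂ] Y | FinRank T} ∧ IsCompactOperator S := by
  have hcl : S ∈ closure {T : X →L[ℂ] Y | FinRank T} := by
    rw [Metric.mem_closure_iff]
    intro ε hε
    set M : ℝ := ‖T₁‖ + ‖T₂‖ + 1 with hMdef
    have hM : 0 < M := by positivity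
    set δ : ℝ := min 1 (ε / (2 * M)) with hδdef
    have hδpos : 0 < δ := lt_min one_pos (by positivity)
    have hδ1 : δ ≤ 1 := min_le_left _ _
    have hδ2 : δ ≤ ε / (2 * M) := min_le_right _ _
    -- pick finite rank approximants
    obtain ⟨A₁, hA₁fin, hA₁d⟩ := Metric.mem_closure_iff.mp hT₁ δ hδpos
    obtain ⟨A₂, hA₂fin, hA₂d⟩ := Metric.mem_closure_iff.mp hT₂ δ hδpos
    rw [dist_eq_norm] at hA₁d hA₂d
    -- the finite rank candidate: lift of the bilinear map (e,f) ↦ u (A₁ e) (A₂ f)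
    obtain ⟨TA, hTAnorm, hTAapp⟩ := ht.lift Y (auxBil u A₁ A₂)
    -- lift of the difference bilinear map
    obtain ⟨TD, hTDnorm, hTDapp⟩ := ht.lift Y (auxBil u T₁ T₂ - auxBil u A₁ A₂)
    have hSTA : S - TA = TD := by
      refine aux_ext t ht.span_dense _ _ fun e f => ?_
      rw [hTDapp]
      simp [hS, hTAapp]
    -- norm bound on the difference bilinear map
    set C : ℝ := ‖T₁ - A₁‖ * ‖T₂‖ + ‖A₁‖ * ‖T₂ - A₂‖ with hCdef
    have hC0 : 0 ≤ C := by positivity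
    have hDnorm : ‖auxBil u T₁ T₂ - auxBil u A₁ A₂‖ ≤ C := by
      refine ContinuousLinearMap.opNorm_le_bound _ hC0 fun e => ?_
      refine ContinuousLinearMap.opNorm_le_bound _ (by positivity) fun f => ?_
      have heq : (auxBil u T₁ T₂ - auxBil u A₁ A₂) e f
          = u (T₁ e - A₁ e) (T₂ f) + u (A₁ e) (T₂ f - A₂ f) := by
        simp only [ContinuousLinearMap.sub_apply, auxBil_apply, map_sub,
          ContinuousLinearMap.sub_apply]
        abel
      rw [heq]
      calc ‖u (T₁ e - A₁ e) (T₂ f) + u (A₁ e) (T₂ f - A₂ f)‖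
          ≤ ‖u (T₁ e - A₁ e) (T₂ f)‖ + ‖u (A₁ e) (T₂ f - A₂ f)‖ := norm_add_le _ _
        _ ≤ ‖T₁ e - A₁ e‖ * ‖T₂ f‖ + ‖A₁ e‖ * ‖T₂ f - A₂ f‖ :=
            add_le_add (hu.norm_le _ _) (hu.norm_le _ _)
        _ ≤ (‖T₁ - A₁‖ * ‖e‖) * (‖T₂‖ * ‖f‖) + (‖A₁‖ * ‖e‖) * (‖T₂ - A₂‖ * ‖f‖) :=
            add_le_add
              (mul_le_mul ((T₁ - A₁).le_opNorm e) (T₂.le_opNorm f) (norm_nonneg _)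
                (by positivity))
              (mul_le_mul (A₁.le_opNorm e) ((T₂ - A₂).le_opNorm f) (norm_nonneg _)
                (by positivity))
        _ = C * ‖e‖ * ‖f‖ := by ring
    -- C is small
    have hA₁norm : ‖A₁‖ ≤ ‖T₁‖ + δ := by
      have := norm_sub_norm_le A₁ T₁
      have h' : ‖A₁ - T₁‖ ≤ δ := by rw [norm_sub_rev]; exact hA₁d.le
      linarith
    have hCsmall : C < ε := by
      have h1 : C ≤ δ * ‖T₂‖ + (‖T₁‖ + δ) * δ := by
        have h2 : ‖T₁ - A₁‖ * ‖T₂‖ ≤ δ * ‖T₂‖ := by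
          gcongr
        have h3 : ‖A₁‖ * ‖T₂ - A₂‖ ≤ (‖T₁‖ + δ) * δ := by
          have := norm_nonneg A₁
          exact mul_le_mul hA₁norm hA₂d.le (norm_nonneg _) (by positivity)
        rw [hCdef]; linarith
      have h4 : δ * ‖T₂‖ + (‖T₁‖ + δ) * δ ≤ δ * M := by
        have : (‖T₁‖ + δ) * δ ≤ (‖T₁‖ + 1) * δ := by gcongr
        have hδ0 : 0 ≤ δ := hδpos.le
        nlinarith [norm_nonneg T₂, norm_nonneg T₁]
      have h5 : δ * M ≤ ε / 2 := by
        have heq : ε / (2 * M) * M = ε / 2 := by field_simp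
        calc δ * M ≤ (ε / (2 * M)) * M := by gcongr
          _ = ε / 2 := heq
      clear_value C δ M
      linarith
    -- finite rank of TA
    have hTAfin : FinRank TA := by
      haveI := hA₁fin
      haveI := hA₂fin
      have hfg₁ : (LinearMap.range (A₁ : E₁ →ₗ[ℂ] F₁)).FG :=
        Module.Finite.iff_fg.mp hA₁fin
      have hfg₂ : (LinearMap.range (A₂ : E₂ →ₗ[ℂ] F₂)).FG :=
        Module.Finite.iff_fg.mp hA₂fin
      obtain ⟨s₁, hs₁⟩ := hfg₁
      obtain ⟨s₂, hs₂⟩ := hfg₂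
      set W : Submodule ℂ Y :=
        Submodule.span ℂ (Set.image2 (fun a b => u a b) (s₁ : Set F₁) (s₂ : Set F₂)) with hW
      haveI : FiniteDimensional ℂ W :=
        FiniteDimensional.span_of_finite ℂ (Set.Finite.image2 _ s₁.finite_toSet s₂.finite_toSet)
      have key : ∀ a ∈ Submodule.span ℂ (s₁ : Set F₁),
          ∀ b ∈ Submodule.span ℂ (s₂ : Set F₂), u a b ∈ W := by
        intro a ha
        induction ha using Submodule.span_induction with
        | mem x hx =>
            intro b hb
            induction hb using Submodule.span_induction with
            | mem y hy => exact Submodule.subset_span (Set.mem_image2_of_mem hx hy)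
            | zero => simp
            | add y z _ _ hy hz => rw [map_add]; exact W.add_mem hy hz
            | smul c y _ hy => rw [map_smul]; exact W.smul_mem c hy
        | zero => intro b hb; simp
        | add x y _ _ hx hy =>
            intro b hb
            rw [map_add, ContinuousLinearMap.add_apply]
            exact W.add_mem (hx b hb) (hy b hb)
        | smul c x _ hx =>
            intro b hb
            rw [map_smul, ContinuousLinearMap.smul_apply]
            exact W.smul_mem c (hx b hb)
      refine aux_finRank t ht.span_dense TA W fun e f => ?_
      rw [hTAapp, auxBil_apply]
      refine key _ ?_ _ ?_
      · rw [hs₁]; exact LinearMap.mem_range_self _ e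
      · rw [hs₂]; exact LinearMap.mem_range_self _ f
    refine ⟨TA, hTAfin, ?_⟩
    rw [dist_eq_norm, hSTA]
    exact lt_of_le_of_lt (hTDnorm.trans hDnorm) hCsmall
  refine ⟨hcl, ?_⟩
  have hsubset : {T : X →L[ℂ] Y | FinRank T} ⊆ {T : X →L[ℂ] Y | IsCompactOperator T} :=
    fun T h => aux_compact T h
  have hclosed : IsClosed {T : X →L[ℂ] Y | IsCompactOperator T} :=
    isClosed_setOf_isCompactOperator
  exact hclosed.closure_subset_iff.mpr hsubset hcl
end

section
/- Let G be a locally compact group and let T : A(G) → A(G) be a bounded A(G)-module homomorphism (T(uv) = u·T(v) for all u, v ∈ A(G)). Then there is a unique function f : G → ℂ with f·A(G) ⊆ A(G) such that T(u) = fu for all u ∈ A(G). -/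
/-!
Fix `x ∈ G` and some `w ∈ A` with `w(x) ≠ 0`. For every `u`, commutativity and the module
property give `w · T u = T (w u) = T (u w) = u · T w`; evaluating at `x` shows that
`(T u)(x) = f(x) u(x)` with `f(x) = (T w)(x) / w(x)`, independently of `u`. Uniqueness holds because
at each point some element of `A` does not vanish.
-/

theorem eq_of_forall_mul_apply_eq {X K A : Type*} [MulZeroClass K] [IsRightCancelMulZero K]
    {j : A → X → K} (hnonzero : ∀ x, ∃ u, j u x ≠ 0) {f g : X → K}
    (h : ∀ u, f * j u = g * j u) : f = g := by
  funext x
  obtain ⟨u, hu⟩ := hnonzero x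
  exact mul_right_cancel₀ hu (congrFun (h u) x)

section ModuleHom

variable {X K A : Type*} [Field K] [CommSemigroup A] {j : A → X → K} {T : A → A}

theorem apply_mul_apply_map_comm (hmul : ∀ u v, j (u * v) = j u * j v)
    (hT : ∀ u v, T (u * v) = u * T v) (u w : A) (x : X) :
    j w x * j (T u) x = j u x * j (T w) x := by
  have h : j (w * T u) = j (u * T w) := by rw [← hT, mul_comm, hT]
  simpa only [hmul, Pi.mul_apply] using congrFun h x

theorem apply_map_eq_ratio_mul (hmul : ∀ u v, j (u * v) = j u * j v)
    (hT : ∀ u v, T (u * v) = u * T v) {w : X → A} (hw : ∀ x, j (w x) x ≠ 0) (u : A) :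
    j (T u) = (fun x => j (T (w x)) x / j (w x) x) * j u := by
  funext x
  rw [Pi.mul_apply, div_mul_eq_mul_div, eq_div_iff (hw x), mul_comm,
    apply_mul_apply_map_comm hmul hT, mul_comm]

end ModuleHom

theorem statement10_general (G : Type)
    (A : Type) [NonUnitalNormedCommRing A] [NormedSpace ℂ A]
    (j : A →ₗ[ℂ] (G → ℂ))
    (hmul : ∀ u v : A, j (u * v) = j u * j v)
    -- point evaluations are the characters of `A`; in particular they are nonzero:
    (hnonzero : ∀ x : G, ∃ u : A, j u x ≠ 0)
    (T : A →L[ℂ] A) (hT : ∀ u v : A, T (u * v) = u * T v) :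
    ∃! f : G → ℂ, ∀ u : A, j (T u) = f * j u := by
  choose w hw using hnonzero
  refine ⟨_, apply_map_eq_ratio_mul hmul hT hw, fun f hf => ?_⟩
  refine eq_of_forall_mul_apply_eq (fun x => ⟨w x, hw x⟩) fun u => ?_
  rw [← hf, apply_map_eq_ratio_mul hmul hT hw]

/-- Let `G` be a locally compact group and let `A` be the Fourier algebra
`A(G)`, realized as a commutative Banach algebra of continuous functions on `G` whose characters
are given by point evaluations (in particular, at each point some element of `A` does not
vanish).  If `T : A → A` is a bounded `A`-module homomorphism (`T(uv) = u·T(v)`), then there is a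
unique function `f : G → ℂ` with `f · A ⊆ A` such that `T u = f u` for all `u ∈ A`. -/
theorem statement10 (G : Type) [TopologicalSpace G] [Group G] [IsTopologicalGroup G]
    [LocallyCompactSpace G] [T2Space G]
    (A : Type) [NonUnitalNormedCommRing A] [NormedSpace ℂ A]
    [IsScalarTower ℂ A A] [SMulCommClass ℂ A A] [CompleteSpace A]
    (j : A →ₗ[ℂ] (G → ℂ)) (hinj : Function.Injective j)
    (hmul : ∀ u v : A, j (u * v) = j u * j v)
    (hcont : ∀ u : A, Continuous (j u))
    -- point evaluations are the characters of `A`; in particular they are nonzero: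
    (hnonzero : ∀ x : G, ∃ u : A, j u x ≠ 0)
    (T : A →L[ℂ] A) (hT : ∀ u v : A, T (u * v) = u * T v) :
    ∃! f : G → ℂ, ∀ u : A, j (T u) = f * j u :=
  statement10_general G A j hmul hnonzero T hT
end
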